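/- arXiv:2312.02933 — 3 statements merged into one kernel-verified Lean document; each statement's English description precedes it below -/
import Mathlib

section
/- The generating function for self-conjugate partitions is Σ_{n≥0} sc(n) q^n = ∏_{j≥0} (1 + q^{2j+1}), where sc(n) is the number of self-conjugate partitions of n. -/
open Finset PowerSeries
open scoped Classical

noncomputable section

/-- Product topology on formal power series, coefficients discrete: the usual topology of
formal power series, in which infinite sums/products of series of increasing order converge. -/
instance psTop (R : Type*) : TopologicalSpace (PowerSeries R) :=
  @Pi.topologicalSpace (Unit →₀ ℕ) (fun _ => R) (fun _ => ⊥)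

/-- `rowLen p i` is the `(i+1)`-st largest part of `p` (0 if none), i.e. `λ_{i+1}`. -/
def rowLen {n : ℕ} (p : n.Partition) (i : ℕ) : ℕ :=
  ((p.parts.sort (· ≤ ·)).reverse).getD i 0

/-- `colLen p j` is the length of the `(j+1)`-st column of the Young diagram, i.e. `λ'_{j+1}`. -/
def colLen {n : ℕ} (p : n.Partition) (j : ℕ) : ℕ :=
  (p.parts.filter (fun a => j < a)).card

/-- A partition is self-conjugate iff every row equals the corresponding column. -/
def SelfConj {n : ℕ} (p : n.Partition) : Prop := ∀ i, rowLen p i = colLen p i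

/-- `hookCount p t` = number of cells of the Young diagram of `p` with hook length exactly `t`;
the hook length of the (0-indexed) cell `(i,j)` is `(λ_i - j) + (λ'_j - i) - 1`. -/
def hookCount {n : ℕ} (p : n.Partition) (t : ℕ) : ℕ :=
  ((range n ×ˢ range n).filter (fun c =>
    c.2 < rowLen p c.1 ∧ (rowLen p c.1 - c.2) + (colLen p c.2 - c.1) - 1 = t)).card

/-- Infinite Pochhammer-type product `(a; b)_∞ = ∏_{j ≥ 0} (1 - a b^j)`. -/
def poch {R : Type*} [CommRing R] (a b : PowerSeries R) : PowerSeries R :=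
  ∏' j : ℕ, (1 - a * b ^ j)

/-- Finite Pochhammer symbol `(a; b)_m = ∏_{j=0}^{m-1} (1 - a b^j)`. -/
def pochN {R : Type*} [CommRing R] (a b : PowerSeries R) (m : ℕ) : PowerSeries R :=
  ∏ j ∈ range m, (1 - a * b ^ j)

/-- Total number of hooks of length `t` among self-conjugate partitions of `n`. -/
def astar (t n : ℕ) : ℕ :=
  ∑ p : n.Partition, if SelfConj p then hookCount p t else 0

/-- Number of self-conjugate partitions of `n`. -/
def sc (n : ℕ) : ℕ := (univ.filter fun p : n.Partition => SelfConj p).card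

/-- Number of partitions of `n` into distinct odd parts. -/
def qstar (n : ℕ) : ℕ :=
  (univ.filter fun p : n.Partition => p.parts.Nodup ∧ ∀ a ∈ p.parts, Odd a).card


lemma dvd_prod_sub_one (n : ℕ) (s : Finset ℕ) (h : ∀ j ∈ s, n < 2 * j + 1) :
    (X : ℚ⟦X⟧) ^ (n + 1) ∣ (∏ j ∈ s, (1 + (X : ℚ⟦X⟧) ^ (2 * j + 1))) - 1 := by
  induction s using Finset.induction_on with
  | empty => simp
  | @insert a s ha ih =>
    rw [Finset.prod_insert ha]
    have h1 : (1 + (X:ℚ⟦X⟧) ^ (2*a+1)) * ∏ j ∈ s, (1 + (X:ℚ⟦X⟧) ^ (2 * j + 1)) - 1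
        = ((∏ j ∈ s, (1 + (X:ℚ⟦X⟧) ^ (2 * j + 1))) - 1)
          + X ^ (2*a+1) * ∏ j ∈ s, (1 + (X:ℚ⟦X⟧) ^ (2 * j + 1)) := by ring
    rw [h1]
    refine dvd_add (ih fun j hj => h j (Finset.mem_insert_of_mem hj)) (Dvd.dvd.mul_right ?_ _)
    exact pow_dvd_pow _ (h a (Finset.mem_insert_self a s))

lemma coeff_stab (n : ℕ) (s : Finset ℕ) (hs : Finset.range (n+1) ⊆ s) :
    (coeff n) (∏ j ∈ s, (1 + (X : ℚ⟦X⟧) ^ (2 * j + 1)))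
      = (coeff n) (∏ j ∈ Finset.range (n+1), (1 + (X : ℚ⟦X⟧) ^ (2 * j + 1))) := by
  rw [← Finset.prod_sdiff hs]
  set A := ∏ j ∈ Finset.range (n+1), (1 + (X : ℚ⟦X⟧) ^ (2 * j + 1))
  set B := ∏ j ∈ s \ Finset.range (n+1), (1 + (X : ℚ⟦X⟧) ^ (2 * j + 1))
  have hd : (X : ℚ⟦X⟧) ^ (n+1) ∣ B - 1 := by
    apply dvd_prod_sub_one
    intro j hj
    have := (Finset.mem_sdiff.mp hj).2
    simp only [Finset.mem_range, not_lt] at this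
    omega
  have h2 : B * A = A + (B - 1) * A := by ring
  rw [h2, map_add, add_eq_left]
  exact PowerSeries.X_pow_dvd_iff.mp (hd.mul_right A) n (Nat.lt_succ_self n)

lemma hasProd_targ :
    HasProd (fun j : ℕ => 1 + (X : ℚ⟦X⟧) ^ (2 * j + 1))
      (PowerSeries.mk fun n =>
        (coeff n) (∏ j ∈ Finset.range (n+1), (1 + (X:ℚ⟦X⟧) ^ (2*j+1)))) := by
  letI : TopologicalSpace ℚ := ⊥
  haveI : DiscreteTopology ℚ := ⟨rfl⟩
  have hd : ∀ φ : ℚ⟦X⟧, ∀ d : Unit →₀ ℕ, φ d = (coeff (d ())) φ := by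
    intro φ d
    conv_lhs => rw [Finsupp.unique_single d]
    rfl
  rw [HasProd, SummationFilter.unconditional_filter]; refine tendsto_pi_nhds.2 ?_
  intro d
  rw [nhds_discrete, Filter.tendsto_pure]
  filter_upwards [Filter.eventually_ge_atTop (Finset.range (d () + 1))] with s hs
  rw [hd (∏ b ∈ s, (1 + X ^ (2 * b + 1))) d,
    hd (PowerSeries.mk fun n => (coeff n) (∏ j ∈ Finset.range (n+1), (1 + (X:ℚ⟦X⟧) ^ (2*j+1)))) d,
    coeff_stab _ s hs, PowerSeries.coeff_mk]


lemma getD_le {L : List ℕ} {j : ℕ} (h : ∀ b ∈ L, b ≤ j) (i : ℕ) : L.getD i 0 ≤ j := by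
  by_cases hi : i < L.length
  · rw [List.getD_eq_getElem L 0 hi]; exact h _ (L.getElem_mem hi)
  · rw [List.getD_eq_default L 0 (not_lt.1 hi)]; exact Nat.zero_le _

lemma sorted_getD_lt_iff : ∀ (L : List ℕ), L.Pairwise (fun a b => b ≤ a) →
    ∀ i j : ℕ, (j < L.getD i 0 ↔ i < (L.countP fun a => decide (j < a)))
  | [], _, i, j => by simp
  | a :: L, h, i, j => by
    have hL : L.Pairwise (fun a b => b ≤ a) := h.of_cons
    have ha : ∀ b ∈ L, b ≤ a := fun b hb => List.rel_of_pairwise_cons h hb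
    cases i with
    | zero =>
      simp only [List.getD_cons_zero, List.countP_cons]
      by_cases hja : j < a
      · simp [hja]
      · have h0 : L.countP (fun a => decide (j < a)) = 0 :=
          List.countP_eq_zero.2 (fun b hb => by
            simp only [decide_eq_true_eq]; exact not_lt.2 (le_trans (ha b hb) (not_lt.1 hja)))
        simp [hja, h0]
    | succ i =>
      simp only [List.getD_cons_succ, List.countP_cons]
      by_cases hja : j < a
      · rw [sorted_getD_lt_iff L hL i j]; simp [hja]
      · have h0 : L.countP (fun a => decide (j < a)) = 0 :=
          List.countP_eq_zero.2 (fun b hb => by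
            simp only [decide_eq_true_eq]; exact not_lt.2 (le_trans (ha b hb) (not_lt.1 hja)))
        have h1 : L.getD i 0 ≤ j := getD_le (fun b hb => le_trans (ha b hb) (not_lt.1 hja)) i
        rw [if_neg (by simp [hja]), h0]
        simp only [add_zero, Nat.not_lt_zero, iff_false, not_lt]
        exact h1

lemma colLen_eq_countP {n : ℕ} (p : n.Partition) (j : ℕ) :
    colLen p j = List.countP (fun a => decide (j < a)) ((p.parts.sort (· ≤ ·)).reverse) := by
  rw [colLen, ← Multiset.countP_eq_card_filter]
  conv_lhs => rw [show p.parts = ((p.parts.sort (· ≤ ·)).reverse : Multiset ℕ) by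
    rw [Multiset.coe_reverse, Multiset.sort_eq]]
  exact Multiset.coe_countP _ _

lemma rowLen_lt_iff {n : ℕ} (p : n.Partition) (i j : ℕ) :
    j < rowLen p i ↔ i < colLen p j := by
  have hs : ((p.parts.sort (· ≤ ·)).reverse).Pairwise (fun a b => b ≤ a) :=
    List.pairwise_reverse.2 (Multiset.pairwise_sort _ _)
  rw [rowLen, sorted_getD_lt_iff _ hs i j, colLen_eq_countP p j]

lemma rowLen_anti {n : ℕ} (p : n.Partition) {i i' : ℕ} (h : i ≤ i') :
    rowLen p i' ≤ rowLen p i := by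
  by_contra hc
  push_neg at hc
  have h1 := (rowLen_lt_iff p i' (rowLen p i)).mp hc
  have h2 := (rowLen_lt_iff p i (rowLen p i)).mpr (lt_of_le_of_lt h h1)
  exact lt_irrefl _ h2

lemma parts_card_le {n : ℕ} (p : n.Partition) : Multiset.card p.parts ≤ n := by
  have := Multiset.card_nsmul_le_sum (fun x hx => p.parts_pos hx)
  simpa [p.parts_sum] using this

lemma colLen_le_card {n : ℕ} (p : n.Partition) (j : ℕ) :
    colLen p j ≤ Multiset.card p.parts :=
  Multiset.card_le_card (Multiset.filter_le _ _)

lemma colLen_zero_eq {n : ℕ} (p : n.Partition) : colLen p 0 = Multiset.card p.parts := by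
  rw [colLen, Multiset.filter_eq_self.2 (fun a ha => p.parts_pos ha)]

lemma rowLen_le {n : ℕ} (p : n.Partition) (i : ℕ) : rowLen p i ≤ n := by
  rw [rowLen]
  set L := (p.parts.sort (· ≤ ·)).reverse with hLdef
  by_cases hi : i < L.length
  · rw [List.getD_eq_getElem L 0 hi]
    have hmem : L[i] ∈ p.parts := by
      have : L[i] ∈ L := L.getElem_mem hi
      rwa [show (p.parts : Multiset ℕ) = ↑L by rw [hLdef, Multiset.coe_reverse, Multiset.sort_eq]]
    calc L[i] ≤ p.parts.sum := Multiset.single_le_sum (fun x _ => Nat.zero_le x) _ hmem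
    _ = n := p.parts_sum
  · rw [List.getD_eq_default L 0 (not_lt.1 hi)]; exact Nat.zero_le _

lemma parts_eq_map_rowLen {n : ℕ} (p : n.Partition) :
    p.parts = Multiset.map (rowLen p) (Multiset.range (Multiset.card p.parts)) := by
  set L := (p.parts.sort (· ≤ ·)).reverse with hLdef
  have hparts : (p.parts : Multiset ℕ) = ↑L := by
    rw [hLdef, Multiset.coe_reverse, Multiset.sort_eq]
  have hcard : Multiset.card p.parts = L.length := by rw [hparts, Multiset.coe_card]
  have hlist : (List.range L.length).map (fun i => L.getD i 0) = L := by
    apply List.ext_getElem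
    · simp
    · intro i h1 h2
      simp only [List.getElem_map, List.getElem_range]
      rw [List.getD_eq_getElem L 0 h2]
  rw [hcard, hparts]
  conv_lhs => rw [← hlist]
  rfl

lemma sum_rowLen {n m : ℕ} (p : n.Partition) (h : Multiset.card p.parts ≤ m) :
    ∑ i ∈ Finset.range m, rowLen p i = n := by
  have h1 : ∑ i ∈ Finset.range (Multiset.card p.parts), rowLen p i = n := by
    have h2 := congrArg Multiset.sum (parts_eq_map_rowLen p)
    rw [p.parts_sum] at h2
    exact h2.symm
  rw [← Finset.sum_range_add_sum_Ico _ h, h1, add_eq_left]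
  apply Finset.sum_eq_zero
  intro i hi
  have : Multiset.card p.parts ≤ i := (Finset.mem_Ico.1 hi).1
  rw [rowLen, List.getD_eq_default]
  rw [List.length_reverse, Multiset.length_sort]
  exact this

lemma rowLen_of_map_antitone {n m : ℕ} (p : n.Partition) (f : ℕ → ℕ)
    (hp : p.parts = Multiset.map f (Multiset.range m))
    (hf : ∀ {i i'}, i ≤ i' → f i' ≤ f i) (h0 : ∀ i, m ≤ i → f i = 0) (i : ℕ) :
    rowLen p i = f i := by
  haveI : IsAntisymm ℕ (fun a b => b ≤ a) := ⟨fun _ _ h h' => le_antisymm h' h⟩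
  set L := (p.parts.sort (· ≤ ·)).reverse with hLdef
  have hparts : (p.parts : Multiset ℕ) = ↑L := by
    rw [hLdef, Multiset.coe_reverse, Multiset.sort_eq]
  have hperm : List.Perm L ((List.range m).map f) := by
    rw [← Multiset.coe_eq_coe, ← hparts, hp]
    rfl
  have hs1 : L.Pairwise (fun a b => b ≤ a) := List.pairwise_reverse.2 (Multiset.pairwise_sort _ _)
  have hs2 : ((List.range m).map f).Pairwise (fun a b => b ≤ a) := by
    rw [List.pairwise_map]
    exact List.Pairwise.imp (fun h => hf (le_of_lt h)) (List.pairwise_lt_range (n := m))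
  have hL : L = (List.range m).map f := hperm.eq_of_pairwise' hs1 hs2
  rw [rowLen, ← hLdef, hL]
  by_cases hi : i < m
  · rw [List.getD_eq_getElem _ 0 (by simpa using hi)]
    simp
  · rw [List.getD_eq_default _ 0 (by simpa using hi), h0 i (not_lt.1 hi)]

def rk (t : Finset ℕ) (k : ℕ) : ℕ := (t.filter fun m => k < m).card

def cellMem (t : Finset ℕ) (x y : ℕ) : Prop :=
  ∃ k ∈ t, min x y = rk t k ∧ max x y ≤ rk t k + k

def lam (N : ℕ) (t : Finset ℕ) (x : ℕ) : ℕ :=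
  ((Finset.range N).filter fun y => cellMem t x y).card

lemma cellMem_symm {t : Finset ℕ} {x y : ℕ} (h : cellMem t x y) : cellMem t y x := by
  obtain ⟨k, hk, h1, h2⟩ := h
  exact ⟨k, hk, by rwa [min_comm], by rwa [max_comm]⟩

lemma rk_lt_card {t : Finset ℕ} {k : ℕ} (hk : k ∈ t) : rk t k < t.card := by
  apply Finset.card_lt_card
  rw [Finset.ssubset_iff_of_subset (Finset.filter_subset _ _)]
  exact ⟨k, hk, by simp⟩

lemma rk_anti {t : Finset ℕ} {k k' : ℕ} (hk : k ∈ t) (hk' : k' ∈ t) (h : k < k') :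
    rk t k' < rk t k := by
  apply Finset.card_lt_card
  constructor
  · intro m hm
    simp only [Finset.mem_filter] at *
    exact ⟨hm.1, lt_trans h hm.2⟩
  · intro hc
    have : k' ∈ t.filter fun m => k < m := by simp [hk', h]
    have := hc this
    simp at this
/-- rank determines the element -/
lemma rk_injOn {t : Finset ℕ} {k k' : ℕ} (hk : k ∈ t) (hk' : k' ∈ t)
    (h : rk t k = rk t k') : k = k' := by
  rcases lt_trichotomy k k' with h1 | h1 | h1
  · exact absurd h (ne_of_gt (rk_anti hk hk' h1))
  · exact h1
  · exact absurd h (ne_of_lt (rk_anti hk' hk h1))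

lemma rk_surj {t : Finset ℕ} {r : ℕ} (hr : r < t.card) : ∃ k ∈ t, rk t k = r := by
  have hmaps : ∀ k ∈ t, rk t k ∈ Finset.range t.card := fun k hk => by
    simpa using rk_lt_card hk
  have := Finset.surj_on_of_inj_on_of_card_le (s := t) (t := Finset.range t.card)
    (f := fun k _ => rk t k) hmaps (fun a b ha hb hab => rk_injOn ha hb hab)
    (by simp)
  obtain ⟨k, hk, hrk⟩ := this r (by simpa using hr)
  exact ⟨k, hk, hrk.symm⟩

lemma rk_add_le {t : Finset ℕ} {k k' : ℕ} (hk : k ∈ t) (hk' : k' ∈ t) (h : k ≤ k') :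
    rk t k + k ≤ rk t k' + k' := by
  have hsplit : t.filter (fun m => k < m)
      = (t.filter fun m => k' < m) ∪ (t.filter fun m => k < m ∧ m ≤ k') := by
    ext m; simp only [Finset.mem_union, Finset.mem_filter]; constructor
    · rintro ⟨hm, h2⟩
      by_cases hmk : m ≤ k'
      · exact Or.inr ⟨hm, h2, hmk⟩
      · exact Or.inl ⟨hm, by omega⟩
    · rintro (⟨hm, h2⟩ | ⟨hm, h2, h3⟩) <;> exact ⟨hm, by omega⟩
  have hdisj : Disjoint (t.filter fun m => k' < m) (t.filter fun m => k < m ∧ m ≤ k') := by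
    rw [Finset.disjoint_filter]
    intro m _ hm
    omega
  have hcard : rk t k = rk t k' + (t.filter fun m => k < m ∧ m ≤ k').card := by
    rw [rk, rk, hsplit, Finset.card_union_of_disjoint hdisj]
  have hioc : (t.filter fun m => k < m ∧ m ≤ k').card ≤ k' - k := by
    calc (t.filter fun m => k < m ∧ m ≤ k').card ≤ (Finset.Ioc k k').card := by
          apply Finset.card_le_card
          intro m hm
          simp only [Finset.mem_filter, Finset.mem_Ioc] at *
          exact hm.2
    _ = k' - k := Nat.card_Ioc k k'
  omega

lemma rk_add_lt_sum {t : Finset ℕ} {k : ℕ} (hk : k ∈ t) :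
    rk t k + k < ∑ j ∈ t, (2 * j + 1) := by
  have hsplit : t = (t.filter fun m => k < m) ∪ (t.filter fun m => ¬ k < m) :=
    (Finset.filter_union_filter_not_eq _ t).symm
  have hdisj : Disjoint (t.filter fun m => k < m) (t.filter fun m => ¬ k < m) :=
    Finset.disjoint_filter_filter_not t t _
  have h1 : rk t k ≤ ∑ j ∈ t.filter (fun m => k < m), (2 * j + 1) := by
    calc rk t k = ∑ _j ∈ t.filter (fun m => k < m), 1 := by rw [rk]; simp
    _ ≤ _ := Finset.sum_le_sum (fun i _ => by omega)
  have h2 : 2 * k + 1 ≤ ∑ j ∈ t.filter (fun m => ¬ k < m), (2 * j + 1) := by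
    apply Finset.single_le_sum (f := fun j => 2 * j + 1) (fun i _ => by omega)
    simp [hk]
  conv_rhs => rw [hsplit]
  rw [Finset.sum_union hdisj]
  omega

lemma card_le_of_sum {t : Finset ℕ} {N : ℕ} (HB : ∀ k ∈ t, rk t k + k < N) :
    t.card ≤ N := by
  rcases Nat.eq_zero_or_pos t.card with h | h
  · omega
  · obtain ⟨k, hk, hrk⟩ := rk_surj (show t.card - 1 < t.card by omega)
    have := HB k hk
    omega

lemma cellMem_rk_iff {t : Finset ℕ} {k y : ℕ} (hk : k ∈ t) :
    cellMem t (rk t k) y ↔ y ≤ rk t k + k := by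
  constructor
  · rintro ⟨k', hk', hmin, hmax⟩
    by_cases hy : rk t k ≤ y
    · have : rk t k = rk t k' := by rw [← hmin]; omega
      have := rk_injOn hk hk' this
      subst this
      omega
    · omega
  · intro hy
    by_cases hy2 : rk t k ≤ y
    · exact ⟨k, hk, by omega, by omega⟩
    · -- y < rk t k : use element of rank y
      obtain ⟨k', hk', hrk'⟩ := rk_surj (show y < t.card by
        have := rk_lt_card hk; omega)
      refine ⟨k', hk', by omega, ?_⟩
      have hkk' : k ≤ k' := by
        by_contra hc
        have := rk_anti hk' hk (by omega)
        omega
      have := rk_add_le hk hk' hkk'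
      omega

lemma cellMem_high_iff {t : Finset ℕ} {x y : ℕ} (hx : t.card ≤ x) :
    cellMem t x y ↔ ∃ k ∈ t, rk t k = y ∧ x ≤ rk t k + k := by
  constructor
  · rintro ⟨k, hk, hmin, hmax⟩
    have hlt := rk_lt_card hk
    refine ⟨k, hk, by omega, by omega⟩
  · rintro ⟨k, hk, hrk, hle⟩
    have hlt := rk_lt_card hk
    exact ⟨k, hk, by omega, by omega⟩

lemma cellMem_dc {t : Finset ℕ} {x y y' : ℕ} (h : cellMem t x y) (hy : y' ≤ y) :
    cellMem t x y' := by
  obtain ⟨k, hk, hmin, hmax⟩ := h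
  by_cases h1 : min x y ≤ y'
  · exact ⟨k, hk, by omega, by omega⟩
  · -- y' < min x y = rk t k
    obtain ⟨k', hk', hrk'⟩ := rk_surj (show y' < t.card by
      have := rk_lt_card hk; omega)
    have hkk' : k ≤ k' := by
      by_contra hc
      have := rk_anti hk' hk (by omega)
      omega
    have := rk_add_le hk hk' hkk'
    exact ⟨k', hk', by omega, by omega⟩

lemma cellMem_iff_lt_lam {N : ℕ} {t : Finset ℕ} {x y : ℕ} (hy : y < N) :
    cellMem t x y ↔ y < lam N t x := by
  constructor
  · intro h
    have hsub : Finset.range (y + 1) ⊆ (Finset.range N).filter fun y' => cellMem t x y' := by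
      intro y' hy'
      simp only [Finset.mem_range] at hy'
      simp only [Finset.mem_filter, Finset.mem_range]
      exact ⟨by omega, cellMem_dc h (by omega)⟩
    have := Finset.card_le_card hsub
    simpa [lam] using this
  · intro h
    by_contra hc
    have hsub : ((Finset.range N).filter fun y' => cellMem t x y') ⊆ Finset.range y := by
      intro y' hy'
      simp only [Finset.mem_filter, Finset.mem_range] at *
      by_contra hc2
      exact hc (cellMem_dc hy'.2 (by omega))
    have := Finset.card_le_card hsub
    simp only [Finset.card_range] at this
    rw [lam] at h
    omega

lemma lam_rk {N : ℕ} {t : Finset ℕ} {k : ℕ} (hk : k ∈ t) (hN : rk t k + k < N) :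
    lam N t (rk t k) = rk t k + k + 1 := by
  have : ((Finset.range N).filter fun y => cellMem t (rk t k) y)
      = Finset.range (rk t k + k + 1) := by
    ext y
    simp only [Finset.mem_filter, Finset.mem_range, cellMem_rk_iff hk]
    omega
  rw [lam, this, Finset.card_range]

lemma lam_high {N : ℕ} {t : Finset ℕ} {x : ℕ} (hx : t.card ≤ x)
    (HB : ∀ k ∈ t, rk t k + k < N) :
    lam N t x = (t.filter fun k => x ≤ rk t k + k).card := by
  have himg : ((Finset.range N).filter fun y => cellMem t x y)
      = (t.filter fun k => x ≤ rk t k + k).image (rk t) := by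
    ext y
    simp only [Finset.mem_filter, Finset.mem_range, Finset.mem_image, cellMem_high_iff hx]
    constructor
    · rintro ⟨hyN, k, hk, hrk, hle⟩
      exact ⟨k, ⟨hk, hle⟩, hrk⟩
    · rintro ⟨k, ⟨hk, hle⟩, hrk⟩
      exact ⟨by have := HB k hk; omega, k, hk, hrk, hle⟩
  rw [lam, himg, Finset.card_image_of_injOn
    (fun a ha b hb hab => rk_injOn (Finset.mem_filter.1 ha).1 (Finset.mem_filter.1 hb).1 hab)]

lemma lam_zero_of_ge {N : ℕ} {t : Finset ℕ} {x : ℕ} (hx : N ≤ x)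
    (HB : ∀ k ∈ t, rk t k + k < N) : lam N t x = 0 := by
  have hd := card_le_of_sum HB
  rw [lam_high (by omega) HB]
  rw [Finset.card_eq_zero, Finset.filter_eq_empty_iff]
  intro k hk
  have := HB k hk
  omega

lemma lam_anti {N : ℕ} {t : Finset ℕ} (HB : ∀ k ∈ t, rk t k + k < N) :
    Antitone (lam N t) := by
  apply antitone_nat_of_succ_le
  intro x
  by_cases hx : x < t.card
  · obtain ⟨k, hk, hrk⟩ := rk_surj hx
    rw [← hrk, lam_rk hk (HB k hk)]
    by_cases hx1 : x + 1 < t.card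
    · obtain ⟨k', hk', hrk'⟩ := rk_surj hx1
      have h2 : rk t k + 1 = rk t k' := by omega
      rw [show rk t k + 1 = rk t k' by omega, lam_rk hk' (HB k' hk')]
      have hkk : k' < k := by
        by_contra hc
        rcases eq_or_lt_of_le (not_lt.1 hc) with h | h
        · subst h; omega
        · have := rk_anti hk hk' h; omega
      omega
    · have : lam N t (rk t k + 1) ≤ t.card := by
        rw [lam_high (by omega) HB]
        exact le_trans (Finset.card_le_card (Finset.filter_subset _ _)) (le_refl _)
      omega
  · rw [lam_high (by omega) HB, lam_high (by omega) HB]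
    apply Finset.card_le_card
    intro k hk
    simp only [Finset.mem_filter] at *
    exact ⟨hk.1, by omega⟩

lemma lam_le {N : ℕ} (t : Finset ℕ) (x : ℕ) : lam N t x ≤ N := by
  rw [lam]
  exact le_trans (Finset.card_le_card (Finset.filter_subset _ _)) (by simp)

def hookF (N : ℕ) (t : Finset ℕ) (k : ℕ) : Finset (ℕ × ℕ) :=
  (Finset.range N ×ˢ Finset.range N).filter fun c =>
    min c.1 c.2 = rk t k ∧ max c.1 c.2 ≤ rk t k + k

lemma hookF_card {N : ℕ} {t : Finset ℕ} {k : ℕ} (hN : rk t k + k < N) :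
    (hookF N t k).card = 2 * k + 1 := by
  set r := rk t k with hr
  have hsplit : hookF N t k
      = ((Finset.Icc r (r + k)).image fun y => (r, y))
        ∪ ((Finset.Icc (r + 1) (r + k)).image fun x => (x, r)) := by
    ext c
    obtain ⟨a, b⟩ := c
    simp only [hookF, Finset.mem_filter, Finset.mem_product, Finset.mem_range,
      Finset.mem_union, Finset.mem_image, Finset.mem_Icc, Prod.mk.injEq]
    constructor
    · rintro ⟨⟨ha, hb⟩, hmin, hmax⟩
      by_cases hab : a ≤ b
      · exact Or.inl ⟨b, by omega, by omega, by omega⟩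
      · exact Or.inr ⟨a, by omega, by omega, by omega⟩
    · rintro (⟨y, hy, hy2, hy3⟩ | ⟨x, hx, hx2, hx3⟩) <;> omega
  have hdisj : Disjoint ((Finset.Icc r (r + k)).image fun y => (r, y))
      ((Finset.Icc (r + 1) (r + k)).image fun x => (x, r)) := by
    rw [Finset.disjoint_left]
    rintro ⟨a, b⟩ h1 h2
    simp only [Finset.mem_image, Finset.mem_Icc, Prod.mk.injEq] at h1 h2
    omega
  rw [hsplit, Finset.card_union_of_disjoint hdisj,
    Finset.card_image_of_injective _ (fun a b hab => by simpa using hab),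
    Finset.card_image_of_injective _ (fun a b hab => by simpa [Prod.ext_iff] using hab),
    Nat.card_Icc, Nat.card_Icc]
  omega

lemma sum_lam_eq {N : ℕ} {t : Finset ℕ} (HB : ∀ k ∈ t, rk t k + k < N) :
    ∑ x ∈ Finset.range N, lam N t x = ∑ k ∈ t, (2 * k + 1) := by
  set C := (Finset.range N ×ˢ Finset.range N).filter (fun c => cellMem t c.1 c.2) with hC
  have h1 : C.card = ∑ x ∈ Finset.range N, lam N t x := by
    rw [Finset.card_eq_sum_card_fiberwise
      (f := fun c => c.1) (t := Finset.range N)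
      (fun c hc => by simp only [Finset.mem_coe, hC, Finset.mem_filter, Finset.mem_product] at hc; exact hc.1.1)]
    apply Finset.sum_congr rfl
    intro x hx
    simp only [Finset.mem_range] at hx
    have : (C.filter fun c => c.1 = x)
        = ((Finset.range N).filter fun y => cellMem t x y).image (fun y => (x, y)) := by
      ext c
      obtain ⟨a, b⟩ := c
      simp only [hC, Finset.mem_filter, Finset.mem_product, Finset.mem_range,
        Finset.mem_image, Prod.mk.injEq]
      constructor
      · rintro ⟨⟨⟨ha, hb⟩, hcell⟩, hax⟩
        exact ⟨b, ⟨hb, by rwa [← hax]⟩, by omega, rfl⟩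
      · rintro ⟨y, ⟨hy, hcell⟩, hxa, hyb⟩
        subst hxa; subst hyb
        exact ⟨⟨⟨hx, hy⟩, hcell⟩, rfl⟩
    rw [this, Finset.card_image_of_injective _ (fun a b hab => by simpa using hab), lam]
  have h2 : C = t.biUnion (hookF N t) := by
    ext c
    obtain ⟨a, b⟩ := c
    simp only [hC, Finset.mem_filter]
    simp only [hC, Finset.mem_filter, Finset.mem_product, Finset.mem_range,
      Finset.mem_biUnion, hookF, cellMem]
    constructor
    · rintro ⟨⟨ha, hb⟩, k, hk, hmin, hmax⟩
      exact ⟨k, hk, ⟨⟨ha, hb⟩, hmin, hmax⟩⟩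
    · rintro ⟨k, hk, ⟨⟨ha, hb⟩, hmin, hmax⟩⟩
      exact ⟨⟨ha, hb⟩, k, hk, hmin, hmax⟩
  have h3 : (t.biUnion (hookF N t)).card = ∑ k ∈ t, (2 * k + 1) := by
    rw [Finset.card_biUnion]
    · exact Finset.sum_congr rfl fun k hk => hookF_card (HB k hk)
    · intro k hk k' hk' hne
      rw [Function.onFun, Finset.disjoint_left]
      rintro ⟨a, b⟩ h1 h2
      simp only [hookF, Finset.mem_filter] at h1 h2
      exact hne (rk_injOn hk hk' (by omega))
  rw [← h1, h2, h3]

lemma downward_eq_range (s : Finset ℕ) (h : ∀ x, x + 1 ∈ s → x ∈ s) :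
    s = Finset.range s.card := by
  have hdc : ∀ d x, x + d ∈ s → x ∈ s := by
    intro d
    induction d with
    | zero => intro x hx; simpa using hx
    | succ d ih => intro x hx; exact h x (ih (x + 1) (by rw [show x + 1 + d = x + (d+1) by omega]; exact hx))
  have hmem : ∀ x, x ∈ s ↔ x < s.card := by
    intro x
    constructor
    · intro hx
      have hsub : Finset.range (x + 1) ⊆ s := by
        intro i hi
        simp only [Finset.mem_range] at hi
        exact hdc (x - i) i (by rw [show i + (x - i) = x by omega]; exact hx)
      have := Finset.card_le_card hsub
      simp only [Finset.card_range] at this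
      omega
    · intro hx
      by_contra hc
      have hsub : s ⊆ Finset.range x := by
        intro y hy
        simp only [Finset.mem_range]
        by_contra hc2
        exact hc (hdc (y - x) x (by rw [show x + (y - x) = y by omega]; exact hy))
      have := Finset.card_le_card hsub
      simp only [Finset.card_range] at this
      omega
  ext x
  simp [hmem x]

/-- The self-conjugate partition built from a finset of distinct "arm lengths". -/
def FP (n : ℕ) (t : Finset ℕ) (hsum : ∑ j ∈ t, (2 * j + 1) = n) : n.Partition where
  parts := Multiset.map (lam n t) ((Finset.range n).filter fun x => 0 < lam n t x).val
  parts_pos := by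
    intro i hi
    obtain ⟨x, hx, hlam⟩ := Multiset.mem_map.1 hi
    rw [← Finset.mem_def] at hx
    simp only [Finset.mem_filter] at hx
    omega
  parts_sum := by
    have HB : ∀ k ∈ t, rk t k + k < n := fun k hk => by
      rw [← hsum]; exact rk_add_lt_sum hk
    have h1 : (Multiset.map (lam n t) ((Finset.range n).filter fun x => 0 < lam n t x).val).sum
        = ∑ x ∈ (Finset.range n).filter fun x => 0 < lam n t x, lam n t x := rfl
    rw [h1, Finset.sum_filter_of_ne (fun x _ h => by omega), sum_lam_eq HB, hsum]

lemma FP_HB {n : ℕ} {t : Finset ℕ} (hsum : ∑ j ∈ t, (2 * j + 1) = n) :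
    ∀ k ∈ t, rk t k + k < n := fun k hk => by
  rw [← hsum]; exact rk_add_lt_sum hk

lemma FP_rowLen {n : ℕ} (t : Finset ℕ) (hsum : ∑ j ∈ t, (2 * j + 1) = n) (i : ℕ) :
    rowLen (FP n t hsum) i = lam n t i := by
  have HB := FP_HB hsum
  set s := (Finset.range n).filter fun x => 0 < lam n t x with hs
  have hdr : s = Finset.range s.card := by
    apply downward_eq_range
    intro x hx
    simp only [hs, Finset.mem_filter, Finset.mem_range] at *
    have := lam_anti HB (show x ≤ x + 1 by omega)
    omega
  apply rowLen_of_map_antitone (FP n t hsum) (lam n t)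
  · show Multiset.map (lam n t) s.val = _
    rw [hdr]
    rfl
  · exact fun h => lam_anti HB h
  · -- vanishing beyond s.card
    intro i hi
    by_contra hc
    have hpos : 0 < lam n t i := by omega
    have hin : i ∈ s := by
      simp only [hs, Finset.mem_filter, Finset.mem_range]
      refine ⟨?_, hpos⟩
      by_contra hc2
      rw [lam_zero_of_ge (by omega) HB] at hpos
      omega
    rw [hdr] at hin
    simp only [Finset.mem_range] at hin
    omega

lemma nat_eq_of_lt_iff {a b : ℕ} (h : ∀ i, i < a ↔ i < b) : a = b := by
  have h1 := h a
  have h2 := h b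
  omega

lemma FP_colLen {n : ℕ} (t : Finset ℕ) (hsum : ∑ j ∈ t, (2 * j + 1) = n) (j : ℕ) :
    colLen (FP n t hsum) j = lam n t j := by
  have HB := FP_HB hsum
  set p := FP n t hsum with hp
  apply nat_eq_of_lt_iff
  intro i
  by_cases hi : i < n
  · by_cases hj : j < n
    · rw [← rowLen_lt_iff, FP_rowLen, ← cellMem_iff_lt_lam hj, ← cellMem_iff_lt_lam hi]
      exact ⟨cellMem_symm, cellMem_symm⟩
    · have h1 : colLen p j = 0 := by
        rw [colLen, Multiset.card_eq_zero, Multiset.filter_eq_nil]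
        intro a ha
        rw [show p.parts = Multiset.map (lam n t)
          ((Finset.range n).filter fun x => 0 < lam n t x).val from rfl] at ha
        obtain ⟨x, _, hlam⟩ := Multiset.mem_map.1 ha
        have := lam_le (N := n) t x
        omega
      rw [h1, lam_zero_of_ge (by omega) HB]
  · have h1 : colLen p j ≤ n := le_trans (colLen_le_card p j) (parts_card_le p)
    have h2 : lam n t j ≤ n := lam_le t j
    omega

lemma FP_selfConj {n : ℕ} (t : Finset ℕ) (hsum : ∑ j ∈ t, (2 * j + 1) = n) :
    SelfConj (FP n t hsum) := fun i => by
  rw [FP_rowLen, FP_colLen]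

/-- Durfee square region of `p`. -/
def DD {n : ℕ} (p : n.Partition) : Finset ℕ :=
  (Finset.range n).filter fun i => i < rowLen p i

/-- arm lengths of the diagonal hooks -/
def phi {n : ℕ} (p : n.Partition) (i : ℕ) : ℕ := rowLen p i - (i + 1)

def GP {n : ℕ} (p : n.Partition) : Finset ℕ := (DD p).image (phi p)

lemma DD_mem {n : ℕ} (p : n.Partition) {i : ℕ} : i ∈ DD p ↔ i < rowLen p i := by
  constructor
  · intro h; exact (Finset.mem_filter.1 h).2
  · intro h
    have h2 : rowLen p i ≤ n := rowLen_le p i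
    exact Finset.mem_filter.2 ⟨Finset.mem_range.2 (by omega), h⟩

lemma DD_down {n : ℕ} (p : n.Partition) {i i' : ℕ} (h : i' ≤ i) (hi : i ∈ DD p) :
    i' ∈ DD p := by
  rw [DD_mem] at *
  have := rowLen_anti p h
  omega

lemma phi_strict {n : ℕ} (p : n.Partition) {i i' : ℕ} (h : i < i') (hi' : i' ∈ DD p) :
    phi p i' < phi p i := by
  have h1 := rowLen_anti p (le_of_lt h)
  have h2 := (DD_mem p).1 hi'
  rw [phi, phi]
  omega

lemma rk_GP {n : ℕ} (p : n.Partition) {i : ℕ} (hi : i ∈ DD p) :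
    rk (GP p) (phi p i) = i := by
  have hflt : (GP p).filter (fun m => phi p i < m) = (Finset.range i).image (phi p) := by
    ext m
    simp only [Finset.mem_filter, GP, Finset.mem_image, Finset.mem_range]
    constructor
    · rintro ⟨⟨i', hi', hphi⟩, hlt⟩
      refine ⟨i', ?_, hphi⟩
      by_contra hc
      have : phi p i ≤ phi p i' → False := by
        intro hle
        rcases eq_or_lt_of_le (not_lt.1 hc) with he | hl
        · subst he; omega
        · have := phi_strict p hl hi'; omega
      exact this (by omega)
    · rintro ⟨i', hi', hphi⟩
      have hmem : i' ∈ DD p := DD_down p (by omega) hi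
      exact ⟨⟨i', hmem, hphi⟩, by rw [← hphi]; exact phi_strict p hi' hi⟩
  rw [rk, hflt, Finset.card_image_of_injOn, Finset.card_range]
  intro a ha b hb hab
  simp only [Finset.mem_range, Finset.coe_sort_coe, Finset.mem_coe] at ha hb
  by_contra hc
  rcases lt_or_gt_of_ne hc with h1 | h1
  · have := phi_strict p h1 (DD_down p (by omega) hi); omega
  · have := phi_strict p h1 (DD_down p (by omega) hi); omega

lemma cell_GP {n : ℕ} (p : n.Partition) (hsc : SelfConj p) (x y : ℕ) :
    cellMem (GP p) x y ↔ y < rowLen p x := by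
  have hgal : ∀ a b : ℕ, b < rowLen p a ↔ a < rowLen p b := by
    intro a b
    rw [rowLen_lt_iff, ← hsc b]
  constructor
  · rintro ⟨k, hk, hmin, hmax⟩
    obtain ⟨i, hi, hphi⟩ := Finset.mem_image.1 hk
    subst hphi
    rw [rk_GP p hi] at hmin hmax
    have hrow := (DD_mem p).1 hi
    rw [phi] at hmax
    by_cases hxy : x ≤ y
    · have hx : x = i := by omega
      subst hx
      omega
    · have hy : y = i := by omega
      subst hy
      rw [hgal]
      omega
  · intro h
    by_cases hxy : x ≤ y
    · have hx : x ∈ DD p := (DD_mem p).2 (by omega)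
      refine ⟨phi p x, Finset.mem_image.2 ⟨x, hx, rfl⟩, ?_, ?_⟩ <;>
        rw [rk_GP p hx] <;> [skip; rw [phi]] <;> omega
    · have hxy2 : x < rowLen p y := by rw [← hgal]; exact h
      have hy : y ∈ DD p := (DD_mem p).2 (by omega)
      refine ⟨phi p y, Finset.mem_image.2 ⟨y, hy, rfl⟩, ?_, ?_⟩ <;>
        rw [rk_GP p hy] <;> [skip; rw [phi]] <;> omega

lemma HB_GP {n : ℕ} (p : n.Partition) : ∀ k ∈ GP p, rk (GP p) k + k < n := by
  intro k hk
  obtain ⟨i, hi, hphi⟩ := Finset.mem_image.1 hk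
  subst hphi
  rw [rk_GP p hi, phi]
  have h1 := (DD_mem p).1 hi
  have h2 := rowLen_le p i
  omega

lemma lam_GP {n : ℕ} (p : n.Partition) (hsc : SelfConj p) (x : ℕ) :
    lam n (GP p) x = rowLen p x := by
  have h1 : ((Finset.range n).filter fun y => cellMem (GP p) x y)
      = Finset.range (rowLen p x) := by
    ext y
    simp only [Finset.mem_filter, Finset.mem_range, cell_GP p hsc]
    have := rowLen_le p x
    omega
  rw [lam, h1, Finset.card_range]

lemma sum_GP {n : ℕ} (p : n.Partition) (hsc : SelfConj p) :
    ∑ k ∈ GP p, (2 * k + 1) = n := by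
  rw [← sum_lam_eq (HB_GP p)]
  rw [Finset.sum_congr rfl (fun x _ => lam_GP p hsc x)]
  exact sum_rowLen p (parts_card_le p)

lemma GP_subset {n : ℕ} (p : n.Partition) : GP p ⊆ Finset.range (n + 1) := by
  intro k hk
  obtain ⟨i, hi, hphi⟩ := Finset.mem_image.1 hk
  have := rowLen_le p i
  rw [Finset.mem_range, ← hphi, phi]
  omega

lemma GP_FP {n : ℕ} (t : Finset ℕ) (hsum : ∑ j ∈ t, (2 * j + 1) = n) :
    GP (FP n t hsum) = t := by
  have HB := FP_HB hsum
  have hdn : t.card ≤ n := card_le_of_sum HB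
  set p := FP n t hsum with hp
  have hDD : DD p = Finset.range t.card := by
    ext i
    rw [DD_mem, Finset.mem_range, FP_rowLen]
    constructor
    · intro h
      by_contra hc
      rw [lam_high (by omega) HB] at h
      have := Finset.card_le_card (Finset.filter_subset (fun k => i ≤ rk t k + k) t)
      omega
    · intro h
      obtain ⟨k, hk, hrk⟩ := rk_surj h
      rw [← hrk, lam_rk hk (HB k hk)]
      omega
  ext k
  rw [GP, hDD]
  simp only [Finset.mem_image, Finset.mem_range]
  constructor
  · rintro ⟨i, hi, hphi⟩
    obtain ⟨k', hk', hrk'⟩ := rk_surj hi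
    rw [phi, FP_rowLen, ← hrk', lam_rk hk' (HB k' hk')] at hphi
    have : k' = k := by omega
    subst this
    exact hk'
  · intro hk
    refine ⟨rk t k, rk_lt_card hk, ?_⟩
    rw [phi, FP_rowLen, lam_rk hk (HB k hk)]
    omega

lemma FP_GP {n : ℕ} (p : n.Partition) (hsc : SelfConj p) :
    FP n (GP p) (sum_GP p hsc) = p := by
  apply Nat.Partition.ext
  rw [show (FP n (GP p) (sum_GP p hsc)).parts = Multiset.map (lam n (GP p))
    ((Finset.range n).filter fun x => 0 < lam n (GP p) x).val from rfl]
  have hfil : ((Finset.range n).filter fun x => 0 < lam n (GP p) x)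
      = Finset.range (Multiset.card p.parts) := by
    ext i
    simp only [Finset.mem_filter, Finset.mem_range, lam_GP p hsc]
    have h1 : (0 < rowLen p i) ↔ i < colLen p 0 := rowLen_lt_iff p i 0
    rw [h1, colLen_zero_eq]
    have := parts_card_le p
    omega
  rw [hfil]
  have hmap : Multiset.map (lam n (GP p)) (Finset.range (Multiset.card p.parts)).val
      = Multiset.map (rowLen p) (Finset.range (Multiset.card p.parts)).val :=
    Multiset.map_congr rfl (fun x _ => lam_GP p hsc x)
  rw [hmap]
  exact (parts_eq_map_rowLen p).symm

theorem sc_card_eq (n : ℕ) :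
    ((Finset.range (n+1)).powerset.filter fun t => ∑ j ∈ t, (2*j+1) = n).card
      = (Finset.univ.filter fun p : n.Partition => SelfConj p).card := by
  refine Finset.card_bij'
    (i := fun t ht => FP n t (by simpa using (Finset.mem_filter.1 ht).2))
    (j := fun p hp => GP p) ?_ ?_ ?_ ?_
  · intro t ht
    simp only [Finset.mem_filter, Finset.mem_univ, true_and]
    exact FP_selfConj _ _
  · intro p hp
    simp only [Finset.mem_filter, Finset.mem_powerset]
    exact ⟨GP_subset p, sum_GP p (by simpa using (Finset.mem_filter.1 hp).2)⟩
  · intro t ht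
    exact GP_FP t _
  · intro p hp
    exact FP_GP p (by simpa using (Finset.mem_filter.1 hp).2)

lemma coeff_prod_count (n : ℕ) :
    (coeff (R := ℚ) n) (∏ j ∈ Finset.range (n+1), (1 + (X:ℚ⟦X⟧) ^ (2*j+1)))
      = ((Finset.range (n+1)).powerset.filter fun t => ∑ j ∈ t, (2*j+1) = n).card := by
  simp_rw [fun j : ℕ => add_comm 1 ((X:ℚ⟦X⟧) ^ (2*j+1))]
  rw [Finset.prod_add]
  simp_rw [Finset.prod_const_one, mul_one]
  rw [map_sum, Finset.card_filter]
  push_cast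
  refine Finset.sum_congr rfl fun t ht => ?_
  rw [Finset.prod_pow_eq_pow_sum, PowerSeries.coeff_X_pow]
  simp [eq_comm]

/-- `Σ_{n ≥ 0} sc(n) q^n = ∏_{j ≥ 0} (1 + q^{2j+1})`. -/
theorem sc_gf :
    (PowerSeries.mk fun n => (sc n : ℚ)) = ∏' j : ℕ, (1 + (X : ℚ⟦X⟧) ^ (2 * j + 1)) := by
  letI : TopologicalSpace ℚ := ⊥
  haveI : DiscreteTopology ℚ := ⟨rfl⟩
  haveI : T2Space (ℚ⟦X⟧) := @Pi.t2Space _ _ _ _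
  have hmk : (PowerSeries.mk fun n => (sc n : ℚ))
      = PowerSeries.mk (fun n =>
        (coeff n) (∏ j ∈ Finset.range (n+1), (1 + (X:ℚ⟦X⟧) ^ (2*j+1)))) := by
    refine congrArg PowerSeries.mk (funext fun n => ?_)
    rw [coeff_prod_count n, sc]
    exact_mod_cast (sc_card_eq n).symm
  rw [hmk]
  exact hasProd_targ.tprod_eq.symm
end
end

section
/- Let F(A;q) := Σ_{n≥0} q^{n²} (A;q²)_n / (q²;q²)_n. Then F(A;q) = (1/2) · (-q;q²)_∞ · [(-√A; -q)_∞ + (√A; -q)_∞]. -/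
open Finset PowerSeries
open scoped Classical

noncomputable section

variable {K : Type*} [Field K]

theorem PS.tendsto_iff {ι : Type*} {F : Filter ι} {g : ι → PowerSeries K} {L : PowerSeries K} :
    Filter.Tendsto g F (nhds L) ↔
      ∀ d : ℕ, ∀ᶠ x in F, (coeff d) (g x) = (coeff d) L := by
  letI : TopologicalSpace K := ⊥
  haveI : DiscreteTopology K := ⟨rfl⟩
  have h1 : Filter.Tendsto g F (nhds L) ↔
      ∀ σ : Unit →₀ ℕ, Filter.Tendsto (fun x => g x σ) F (nhds (L σ)) := tendsto_pi_nhds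
  rw [h1]
  constructor
  · intro h d
    have := h (Finsupp.single () d)
    rw [nhds_discrete, Filter.tendsto_pure] at this
    exact this
  · intro h σ
    rw [nhds_discrete, Filter.tendsto_pure]
    have hσ : σ = Finsupp.single () (σ ()) := by
      conv_lhs => rw [Finsupp.unique_single σ]
    have := h (σ ())
    rw [hσ]
    exact this

instance : T2Space (PowerSeries K) := by
  letI : TopologicalSpace K := ⊥
  haveI : DiscreteTopology K := ⟨rfl⟩
  exact @Pi.t2Space (Unit →₀ ℕ) (fun _ => K) _ (fun _ => inferInstance)

instance : ContinuousMul (PowerSeries K) := by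
  letI : TopologicalSpace K := ⊥
  haveI : DiscreteTopology K := ⟨rfl⟩
  constructor
  apply continuous_pi
  intro σ
  have : (fun p : PowerSeries K × PowerSeries K => (p.1 * p.2) σ) =
      fun p => ∑ x ∈ Finset.HasAntidiagonal.antidiagonal σ,
        p.1 x.1 * p.2 x.2 := by
    funext p
    exact MvPowerSeries.coeff_mul σ p.1 p.2
  rw [this]
  apply continuous_finset_sum
  intro x _
  exact ((continuous_apply x.1).comp continuous_fst).mul
    ((continuous_apply x.2).comp continuous_snd)

/-- truncation congruence -/
def Ecoeff (d : ℕ) (P Q : PowerSeries K) : Prop := ∀ e ≤ d, coeff e P = coeff e Q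

theorem Ecoeff.refl {d : ℕ} (P : PowerSeries K) : Ecoeff d P P := fun _ _ => rfl

theorem Ecoeff.mul {d : ℕ} {P P' Q Q' : PowerSeries K} (h1 : Ecoeff d P P')
    (h2 : Ecoeff d Q Q') : Ecoeff d (P * Q) (P' * Q') := by
  intro e he
  rw [coeff_mul, coeff_mul]
  apply Finset.sum_congr rfl
  intro x hx
  rw [Finset.HasAntidiagonal.mem_antidiagonal] at hx
  rw [h1 x.1 (le_trans (by omega) he), h2 x.2 (le_trans (by omega) he)]

theorem PS.hasSum_of_coeff {f : ℕ → PowerSeries K} {S : PowerSeries K} (N : ℕ → ℕ)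
    (hf : ∀ d n, N d ≤ n → coeff d (f n) = 0)
    (hS : ∀ d, coeff d S = ∑ n ∈ range (N d), coeff d (f n)) : HasSum f S := by
  rw [HasSum, PS.tendsto_iff]
  intro d
  filter_upwards [Filter.eventually_ge_atTop (range (N d))] with s hs
  rw [map_sum, hS]
  symm
  apply Finset.sum_subset hs
  intro x _ hx
  exact hf d x (by simpa using hx)

theorem PS.coeff_tsum {f : ℕ → PowerSeries K} (N : ℕ → ℕ)
    (hf : ∀ d n, N d ≤ n → coeff d (f n) = 0) (d : ℕ) :
    coeff d (∑' n, f n) = ∑ n ∈ range (N d), coeff d (f n) := by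
  have h : HasSum f (PowerSeries.mk fun e => ∑ n ∈ range (N e), coeff e (f n)) :=
    PS.hasSum_of_coeff N hf (fun e => by rw [coeff_mk])
  rw [h.tsum_eq, coeff_mk]

theorem PS.tsum_eq_of_coeff {f : ℕ → PowerSeries K} {S : PowerSeries K} (N : ℕ → ℕ)
    (hf : ∀ d n, N d ≤ n → coeff d (f n) = 0)
    (hS : ∀ d, coeff d S = ∑ n ∈ range (N d), coeff d (f n)) : (∑' n, f n) = S :=
  (PS.hasSum_of_coeff N hf hS).tsum_eq

theorem PS.hasProd_of_coeff {f : ℕ → PowerSeries K} {P : PowerSeries K} (N : ℕ → ℕ)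
    (hf : ∀ d j, N d ≤ j → Ecoeff d (f j) 1)
    (hP : ∀ d, coeff d P = coeff d (∏ j ∈ range (N d), f j)) : HasProd f P := by
  rw [HasProd, PS.tendsto_iff]
  intro d
  filter_upwards [Filter.eventually_ge_atTop (range (N d))] with s hs
  have hsplit : ∏ j ∈ s, f j = (∏ j ∈ range (N d), f j) * ∏ j ∈ s \ range (N d), f j := by
    rw [← Finset.prod_union (Finset.disjoint_sdiff)]
    congr 1
    rw [Finset.union_sdiff_of_subset hs]
  have key : ∀ t : Finset ℕ, (∀ j ∈ t, Ecoeff d (f j) 1) → Ecoeff d (∏ j ∈ t, f j) 1 := by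
    intro t
    induction t using Finset.induction with
    | empty => intro _; simpa using Ecoeff.refl 1
    | @insert a t ha ih =>
      intro h
      rw [Finset.prod_insert ha]
      have := Ecoeff.mul (h a (Finset.mem_insert_self a t))
        (ih (fun j hj => h j (Finset.mem_insert_of_mem hj)))
      simpa using this
  have hone : Ecoeff d (∏ j ∈ s \ range (N d), f j) 1 := by
    apply key
    intro j hj
    rw [Finset.mem_sdiff, Finset.mem_range] at hj
    exact hf d j (by omega)
  rw [hsplit, hP]
  have := Ecoeff.mul (Ecoeff.refl (K := K) (∏ j ∈ range (N d), f j)) hone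
  rw [mul_one] at this
  exact this d le_rfl

theorem coeff_mul_pow_eq_zero {a b : PowerSeries K} (hb : constantCoeff b = 0)
    {e j : ℕ} (he : e < j) : coeff e (a * b ^ j) = 0 := by
  have : (X : K⟦X⟧) ^ j ∣ a * b ^ j := Dvd.dvd.mul_left (pow_dvd_pow_of_dvd (X_dvd_iff.2 hb) j) a
  exact X_pow_dvd_iff.1 this e he

theorem Ecoeff_one_sub {a b : PowerSeries K} (hb : constantCoeff b = 0) {d j : ℕ}
    (hj : d < j) : Ecoeff d (1 - a * b ^ j) 1 := by
  intro e he
  rw [map_sub, coeff_mul_pow_eq_zero hb (lt_of_le_of_lt he hj), sub_zero]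

theorem pochN_succ {R : Type*} [CommRing R] (a b : PowerSeries R) (n : ℕ) :
    pochN a b (n + 1) = pochN a b n * (1 - a * b ^ n) := Finset.prod_range_succ _ _

theorem pochN_succ' {R : Type*} [CommRing R] (a b : PowerSeries R) (n : ℕ) :
    pochN a b (n + 1) = (1 - a) * pochN (a * b) b n := by
  rw [pochN, Finset.prod_range_succ']
  simp only [pow_zero, mul_one, pochN]
  rw [mul_comm]
  congr 1
  apply Finset.prod_congr rfl
  intro j _
  rw [pow_succ']
  ring

theorem pochN_add {R : Type*} [CommRing R] (a b : PowerSeries R) (m k : ℕ) :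
    pochN a b (m + k) = pochN a b m * pochN (a * b ^ m) b k := by
  rw [pochN, Finset.prod_range_add]
  congr 1
  apply Finset.prod_congr rfl
  intro j _
  rw [pow_add]
  ring

theorem constantCoeff_pochN {a b : PowerSeries K} (ha : constantCoeff a = 0) (m : ℕ) :
    constantCoeff (pochN a b m) = 1 := by
  rw [pochN, map_prod]
  apply Finset.prod_eq_one
  intro j _
  rw [map_sub, map_one, map_mul, ha, zero_mul, sub_zero]

theorem hasProd_poch {a b : PowerSeries K} (hb : constantCoeff b = 0) :
    HasProd (fun j => 1 - a * b ^ j) (poch a b) := by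
  have h : HasProd (fun j => 1 - a * b ^ j)
      (PowerSeries.mk fun e => coeff e (pochN a b (e + 1))) := by
    apply PS.hasProd_of_coeff (fun d => d + 1)
    · intro d j hj
      exact Ecoeff_one_sub hb (by omega)
    · intro d
      rw [coeff_mk]; rfl
  rwa [poch, h.tprod_eq]

theorem Ecoeff_pochN_tail {a b : PowerSeries K} (hb : constantCoeff b = 0) {d m : ℕ}
    (hm : d < m) (k : ℕ) : Ecoeff d (pochN (a * b ^ m) b k) 1 := by
  induction k with
  | zero => intro e he; rfl
  | succ k ih =>
    rw [pochN_succ]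
    have h2 : Ecoeff d (1 - a * b ^ m * b ^ k) 1 := by
      rw [mul_assoc, ← pow_add]
      exact Ecoeff_one_sub hb (by omega)
    have := Ecoeff.mul ih h2
    simpa using this

theorem coeff_poch {a b : PowerSeries K} (hb : constantCoeff b = 0) {d n : ℕ}
    (hn : d + 1 ≤ n) : coeff d (poch a b) = coeff d (pochN a b n) := by
  have h := (hasProd_poch (a := a) hb)
  have h2 : HasProd (fun j => 1 - a * b ^ j)
      (PowerSeries.mk fun e => coeff e (pochN a b (e + 1))) := by
    apply PS.hasProd_of_coeff (fun d => d + 1)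
    · intro d j hj; exact Ecoeff_one_sub hb (by omega)
    · intro d; rw [coeff_mk]; rfl
  rw [h.unique h2, coeff_mk]
  obtain ⟨k, rfl⟩ : ∃ k, n = (d + 1) + k := ⟨n - (d+1), by omega⟩
  conv_rhs => rw [pochN_add]
  have : Ecoeff d (pochN a b (d+1) * pochN (a * b ^ (d+1)) b k) (pochN a b (d+1) * 1) :=
    Ecoeff.mul (Ecoeff.refl _) (Ecoeff_pochN_tail hb (by omega) k)
  rw [this d le_rfl, mul_one]

theorem poch_split {a b : PowerSeries K} (hb : constantCoeff b = 0) (r : ℕ) :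
    poch a b = pochN a b r * poch (a * b ^ r) b := by
  apply PowerSeries.ext
  intro d
  rw [coeff_poch hb (le_refl (d+1))]
  have h2 : Ecoeff d (pochN a b r * poch (a * b ^ r) b)
      (pochN a b r * pochN (a * b ^ r) b (d + 1)) := by
    apply Ecoeff.mul (Ecoeff.refl _)
    intro e he
    exact coeff_poch hb (by omega)
  rw [h2 d le_rfl, ← pochN_add]
  have hk : r + (d + 1) = (d + 1) + r := by omega
  rw [hk]
  conv_rhs => rw [pochN_add]
  have : Ecoeff d (pochN a b (d+1) * pochN (a * b ^ (d+1)) b r) (pochN a b (d+1) * 1) :=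
    Ecoeff.mul (Ecoeff.refl _) (Ecoeff_pochN_tail hb (by omega) r)
  rw [this d le_rfl, mul_one]

/-- Gaussian binomial with base `b`, inverse-free. -/
def gb (b : PowerSeries K) : ℕ → ℕ → PowerSeries K
  | 0, 0 => 1
  | 0, _+1 => 0
  | _+1, 0 => 1
  | n+1, m+1 => gb b n (m+1) * b ^ (m+1) + gb b n m

theorem pochN_zero {R : Type*} [CommRing R] (a b : PowerSeries R) : pochN a b 0 = 1 :=
  Finset.prod_range_zero _

theorem gb_gt (b : PowerSeries K) : ∀ n m : ℕ, n < m → gb b n m = 0 := by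
  intro n
  induction n with
  | zero => intro m hm; match m with | k+1 => rfl
  | succ n ih =>
    intro m hm
    match m with
    | m'+1 =>
      show gb b n (m'+1) * b ^ (m'+1) + gb b n m' = 0
      rw [ih (m'+1) (by omega), ih m' (by omega)]
      ring

theorem gb_mul (b : PowerSeries K) : ∀ n m : ℕ, m ≤ n →
    gb b n m * (pochN b b m * pochN b b (n - m)) = pochN b b n := by
  intro n
  induction n with
  | zero =>
    intro m hm
    interval_cases m
    simp [gb, pochN]
  | succ n ih =>
    intro m hm
    match m with
    | 0 =>
      simp [gb, pochN]
    | m+1 =>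
      rw [show n + 1 - (m + 1) = n - m by omega]
      rw [gb, add_mul]
      by_cases hmn : m + 1 ≤ n
      · have e1 : pochN b b (n - m) = pochN b b (n - (m+1)) * (1 - b ^ (n - m)) := by
          rw [show n - m = (n - (m+1)) + 1 by omega, pochN_succ, ← pow_succ']
        have e2 : pochN b b (m + 1) = pochN b b m * (1 - b ^ (m+1)) := by
          rw [pochN_succ, ← pow_succ']
        have h1 := ih (m+1) hmn
        have h2 := ih m (by omega)
        have e3 : pochN b b (n+1) = pochN b b n * (1 - b ^ (n+1)) := by
          rw [pochN_succ, ← pow_succ']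
        have e4 : (b : K⟦X⟧) ^ (n+1) = b ^ (m+1) * b ^ (n - m) := by
          rw [← pow_add]; congr 1; omega
        rw [e3, e4, e1, e2]
        rw [e2] at h1
        rw [e1] at h2
        linear_combination (b^(m+1) * (1 - b^(n-m))) * h1 + (1 - b^(m+1)) * h2
      · have hmn2 : m = n := by omega
        subst hmn2
        rw [gb_gt b m (m+1) (by omega)]
        have h2 := ih m le_rfl
        simp only [Nat.sub_self, pochN_zero] at h2 ⊢
        have e2 : pochN b b (m + 1) = pochN b b m * (1 - b ^ (m+1)) := by
          rw [pochN_succ, ← pow_succ']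
        rw [e2]
        linear_combination (1 - b^(m+1)) * h2

theorem gb_zero (b : PowerSeries K) (n : ℕ) : gb b n 0 = 1 := by
  cases n <;> rfl

theorem choose_succ_two (k : ℕ) : (k+1).choose 2 = k.choose 2 + k := by
  rw [Nat.choose_succ_succ k 1, Nat.choose_one_right]
  exact Nat.add_comm _ _

theorem qbinom (b : PowerSeries K) : ∀ (n : ℕ) (a : PowerSeries K),
    pochN a b n = ∑ m ∈ range (n+1), (-1)^m * b^(m.choose 2) * a^m * gb b n m := by
  intro n
  induction n with
  | zero => intro a; simp [pochN_zero, gb]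
  | succ n ih =>
    intro a
    rw [pochN_succ', ih (a*b)]
    set t : ℕ → K⟦X⟧ := fun m => (-1)^m * b^(m.choose 2) * (a*b)^m * gb b n m with ht
    have hsplit : ∑ m ∈ range (n+2), (-1)^m * b^(m.choose 2) * a^m * gb b (n+1) m
        = (∑ k ∈ range (n+1), ((-1)^(k+1) * b^((k+1).choose 2) * a^(k+1) *
            (gb b n (k+1) * b^(k+1)) + (-1)^(k+1) * b^((k+1).choose 2) * a^(k+1) * gb b n k))
          + 1 := by
      rw [Finset.sum_range_succ']
      congr 1
      · apply Finset.sum_congr rfl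
        intro k _
        have : gb b (n+1) (k+1) = gb b n (k+1) * b^(k+1) + gb b n k := rfl
        rw [this]; ring
      · simp [gb_zero]
    rw [hsplit, Finset.sum_add_distrib]
    have h1 : ∑ k ∈ range (n+1), (-1)^(k+1) * b^((k+1).choose 2) * a^(k+1) *
        (gb b n (k+1) * b^(k+1)) = (∑ m ∈ range (n+1), t m) - 1 := by
      have e1 : ∀ k, (-1 : K⟦X⟧)^(k+1) * b^((k+1).choose 2) * a^(k+1) * (gb b n (k+1) * b^(k+1))
          = t (k+1) := by
        intro k
        rw [ht]
        simp only [mul_pow]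
        ring
      rw [Finset.sum_congr rfl (fun k _ => e1 k)]
      rw [Finset.sum_range_succ]
      have etop : t (n+1) = 0 := by
        rw [ht]; simp [gb_gt b n (n+1) (by omega)]
      rw [etop]
      have e2 : ∑ k ∈ range n, t (k+1) = (∑ m ∈ range (n+1), t m) - t 0 := by
        rw [Finset.sum_range_succ' t n]; ring
      rw [e2]
      have e3 : t 0 = 1 := by rw [ht]; simp [gb_zero]
      rw [e3]; ring
    have h2 : ∑ k ∈ range (n+1), (-1)^(k+1) * b^((k+1).choose 2) * a^(k+1) * gb b n k
        = -(a * ∑ m ∈ range (n+1), t m) := by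
      conv_rhs => rw [Finset.mul_sum, ← neg_one_mul, Finset.mul_sum]
      apply Finset.sum_congr rfl
      intro k _
      rw [ht]
      simp only [choose_succ_two, mul_pow, pow_add, pow_succ]
      ring
    rw [h1, h2]
    ring

theorem coeff_zero_of_bpow {b φ : PowerSeries K} (hb : constantCoeff b = 0) {j e : ℕ}
    (h : b ^ j ∣ φ) (he : e < j) : coeff e φ = 0 :=
  X_pow_dvd_iff.1 (dvd_trans (pow_dvd_pow_of_dvd (X_dvd_iff.2 hb) j) h) e he

theorem choose_lower {d m : ℕ} (hm : d + 2 ≤ m) : d < m.choose 2 := by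
  have h1 : (d+2).choose 2 ≤ m.choose 2 := Nat.choose_le_choose 2 hm
  have h2 : (d+2).choose 2 = (d+1).choose 2 + (d+1) := choose_succ_two (d+1)
  omega

theorem pochN_unit {b : PowerSeries K} (hb : constantCoeff b = 0) (m : ℕ) :
    constantCoeff (pochN b b m) ≠ 0 := by
  rw [constantCoeff_pochN hb]; exact one_ne_zero

theorem Ecoeff_gb {b : PowerSeries K} (hb : constantCoeff b = 0) {d n m : ℕ}
    (hmn : m ≤ n) (hd : d < n - m) : Ecoeff d (gb b n m) ((pochN b b m)⁻¹) := by
  have key := gb_mul b n m hmn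
  have hPm := PowerSeries.inv_mul_cancel _ (pochN_unit hb m)
  have hPnm := PowerSeries.inv_mul_cancel _ (pochN_unit hb (n - m))
  have hPn : pochN b b n = pochN b b (n-m) * pochN (b * b ^ (n-m)) b m := by
    conv_lhs => rw [show n = (n - m) + m from by omega]
    rw [pochN_add]
  have hgb : gb b n m = pochN (b * b ^ (n-m)) b m * (pochN b b m)⁻¹ := by
    calc gb b n m = gb b n m * (pochN b b m * (pochN b b m)⁻¹)
          * (pochN b b (n-m) * (pochN b b (n-m))⁻¹) := by
          rw [mul_comm (pochN b b m), hPm, mul_comm (pochN b b (n-m)), hPnm]; ring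
      _ = (gb b n m * (pochN b b m * pochN b b (n-m)))
          * ((pochN b b m)⁻¹ * (pochN b b (n-m))⁻¹) := by ring
      _ = pochN b b n * ((pochN b b m)⁻¹ * (pochN b b (n-m))⁻¹) := by rw [key]
      _ = pochN (b * b ^ (n-m)) b m * ((pochN b b (n-m))⁻¹ * pochN b b (n-m))
          * (pochN b b m)⁻¹ := by rw [hPn]; ring
      _ = pochN (b * b ^ (n-m)) b m * (pochN b b m)⁻¹ := by rw [hPnm]; ring
  rw [hgb]
  have := Ecoeff.mul (Ecoeff_pochN_tail (a := b) hb hd m) (Ecoeff.refl ((pochN b b m)⁻¹))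
  rwa [one_mul] at this

theorem euler {a b : PowerSeries K} (hb : constantCoeff b = 0) :
    poch a b = ∑' m, (-1)^m * b^(m.choose 2) * a^m * (pochN b b m)⁻¹ := by
  symm
  apply PS.tsum_eq_of_coeff (fun d => d + 2)
  · intro d m hm
    exact coeff_zero_of_bpow hb (j := m.choose 2)
      ⟨(-1)^m * a^m * (pochN b b m)⁻¹, by ring⟩ (choose_lower hm)
  · intro d
    rw [coeff_poch hb (show d+1 ≤ 2*d+3 by omega), qbinom b (2*d+3) a, map_sum]
    rw [show 2*d+3+1 = 2*d+4 by omega]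
    have hsub : range (d+2) ⊆ range (2*d+4) := by
      apply Finset.range_subset_range.2; omega
    rw [← Finset.sum_subset hsub (fun m _ hm => by
      exact coeff_zero_of_bpow hb (j := m.choose 2)
        ⟨(-1)^m * a^m * gb b (2*d+3) m, by ring⟩
        (choose_lower (by simpa [Finset.mem_range] using hm)))]
    apply Finset.sum_congr rfl
    intro m hm
    rw [Finset.mem_range] at hm
    have hE : Ecoeff d ((-1)^m * b^(m.choose 2) * a^m * gb b (2*d+3) m)
        ((-1)^m * b^(m.choose 2) * a^m * (pochN b b m)⁻¹) :=
      Ecoeff.mul (Ecoeff.refl _) (Ecoeff_gb hb (by omega) (by omega))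
    exact hE d le_rfl

instance : ContinuousAdd (PowerSeries K) := by
  letI : TopologicalSpace K := ⊥
  haveI : DiscreteTopology K := ⟨rfl⟩
  constructor
  apply continuous_pi
  intro σ
  have : (fun p : PowerSeries K × PowerSeries K => (p.1 + p.2) σ) =
      fun p => p.1 σ + p.2 σ := rfl
  rw [this]
  exact ((continuous_apply σ).comp continuous_fst).add
    ((continuous_apply σ).comp continuous_snd)

instance : IsTopologicalSemiring (PowerSeries K) := { }

theorem PS.coeff_of_hasSum {f : ℕ → PowerSeries K} {S : PowerSeries K} (h : HasSum f S)
    (N : ℕ → ℕ) (hf : ∀ d n, N d ≤ n → coeff d (f n) = 0) (d : ℕ) :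
    coeff d S = ∑ n ∈ range (N d), coeff d (f n) := by
  have h2 : HasSum f (PowerSeries.mk fun e => ∑ n ∈ range (N e), coeff e (f n)) :=
    PS.hasSum_of_coeff N hf (fun e => by rw [coeff_mk])
  rw [h.unique h2, coeff_mk]

theorem euler_hasSum {a b : PowerSeries K} (hb : constantCoeff b = 0) :
    HasSum (fun m => (-1)^m * b^(m.choose 2) * a^m * (pochN b b m)⁻¹) (poch a b) := by
  have hf : ∀ d m, d + 2 ≤ m →
      coeff d ((-1)^m * b^(m.choose 2) * a^m * (pochN b b m)⁻¹) = 0 :=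
    fun d m hm => coeff_zero_of_bpow hb
      ⟨(-1)^m * a^m * (pochN b b m)⁻¹, by ring⟩ (choose_lower hm)
  have h := PS.hasSum_of_coeff (K := K) (fun d => d+2) hf
    (S := PowerSeries.mk fun e => ∑ m ∈ range (e+2),
      coeff e ((-1)^m * b^(m.choose 2) * a^m * (pochN b b m)⁻¹))
    (fun d => by rw [coeff_mk])
  have he : poch a b = PowerSeries.mk fun e => ∑ m ∈ range (e+2),
      coeff e ((-1)^m * b^(m.choose 2) * a^m * (pochN b b m)⁻¹) := by
    rw [euler hb, h.tsum_eq]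
  rwa [he]

theorem pochN_ne_zero {b : PowerSeries K} (hb : constantCoeff b = 0) (n : ℕ) :
    pochN b b n ≠ 0 := by
  intro hh
  exact pochN_unit hb n (by rw [hh, map_zero])

theorem gbinv {b : PowerSeries K} (hb : constantCoeff b = 0) {n r : ℕ} (h : r ≤ n) :
    gb b n r * (pochN b b n)⁻¹ = (pochN b b r)⁻¹ * (pochN b b (n-r))⁻¹ := by
  have key := gb_mul b n r h
  have hn := PowerSeries.inv_mul_cancel _ (pochN_unit hb n)
  have hr := PowerSeries.inv_mul_cancel _ (pochN_unit hb r)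
  have hnr := PowerSeries.inv_mul_cancel _ (pochN_unit hb (n-r))
  apply mul_right_cancel₀ (pochN_ne_zero hb n)
  rw [mul_assoc, hn, mul_one]
  conv_rhs => rw [← key]
  symm
  calc (pochN b b r)⁻¹ * (pochN b b (n-r))⁻¹ * (gb b n r * (pochN b b r * pochN b b (n-r)))
      = gb b n r * (((pochN b b r)⁻¹ * pochN b b r) * ((pochN b b (n-r))⁻¹ * pochN b b (n-r)))
        := by ring
    _ = gb b n r := by rw [hr, hnr]; ring

theorem interleave (r : ℕ) : pochN (-X : K⟦X⟧) (-X) (2*r)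
    = pochN ((X:K⟦X⟧)^2) (X^2) r * pochN (-X) (X^2) r := by
  induction r with
  | zero => simp [pochN_zero]
  | succ r ih =>
    have h1 : 2*(r+1) = (2*r) + 1 + 1 := by omega
    rw [h1, pochN_succ, pochN_succ, pochN_succ, pochN_succ, ih]
    have e1 : (-X : K⟦X⟧)^(2*r) = X^(2*r) := Even.neg_pow ⟨r, by omega⟩ _
    have e2 : (-X : K⟦X⟧)^(2*r+1) = -(X^(2*r)*X) := by
      rw [pow_succ, Even.neg_pow ⟨r, by omega⟩]; ring
    have e3 : ((X:K⟦X⟧)^2)^r = X^(2*r) := by rw [← pow_mul, Nat.mul_comm]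
    rw [e1, e2, e3]
    ring

theorem two_choose_two (r : ℕ) : 2 * r.choose 2 + r = r^2 := by
  induction r with
  | zero => rfl
  | succ r ih =>
    rw [choose_succ_two]
    have : (r+1)^2 = r^2 + 2*r + 1 := by ring
    omega

theorem choose2r (r : ℕ) : (2*r).choose 2 = r^2 + 2 * r.choose 2 := by
  have h1 := two_choose_two (2*r)
  have h2 := two_choose_two r
  have h3 : (2*r)^2 = 4*r^2 := by ring
  omega

theorem constantCoeff_X2 : constantCoeff ((X:K⟦X⟧)^2) = 0 := by
  rw [map_pow, constantCoeff_X]; ring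

theorem constantCoeff_negX : constantCoeff (-X:K⟦X⟧) = 0 := by
  rw [map_neg, constantCoeff_X]; ring

theorem term_eq (β : K) (r m : ℕ) :
    X^((r+m)^2) * ((-1)^r * ((X:K⟦X⟧)^2)^(r.choose 2) * (C (β^2))^r
        * gb ((X:K⟦X⟧)^2) (r+m) r) * (pochN ((X:K⟦X⟧)^2) (X^2) (r+m))⁻¹
    = ((-1)^r * X^(r^2) * ((X:K⟦X⟧)^2)^(r.choose 2) * (C β)^(2*r)
        * (pochN ((X:K⟦X⟧)^2) (X^2) r)⁻¹)
      * ((-1)^m * ((X:K⟦X⟧)^2)^(m.choose 2) * ((-X) * ((X:K⟦X⟧)^2)^r)^m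
        * (pochN ((X:K⟦X⟧)^2) (X^2) m)⁻¹) := by
  have hgb : gb ((X:K⟦X⟧)^2) (r+m) r * (pochN ((X:K⟦X⟧)^2) (X^2) (r+m))⁻¹
      = (pochN ((X:K⟦X⟧)^2) (X^2) r)⁻¹ * (pochN ((X:K⟦X⟧)^2) (X^2) m)⁻¹ := by
    have := gbinv (constantCoeff_X2 (K := K)) (show r ≤ r+m by omega)
    rwa [show r+m-r = m from by omega] at this
  have hC : (C (β^2))^r = (C β)^(2*r) := by
    rw [← map_pow, ← map_pow, pow_mul]
  have hneg : ((-X) * ((X:K⟦X⟧)^2)^r)^m = (-1)^m * X^((2*r+1)*m) := by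
    rw [show ((-X) * ((X:K⟦X⟧)^2)^r) = -(X^(2*r+1)) by rw [← pow_mul]; ring]
    rw [neg_pow, ← pow_mul]
  have hs : ((-1 : K⟦X⟧))^m * (-1)^m = 1 := by
    rw [← pow_add, ← two_mul, pow_mul]
    norm_num
  have hx : (X:K⟦X⟧)^((r+m)^2) = X^(r^2) * X^(2*(m.choose 2)) * X^((2*r+1)*m) := by
    rw [← pow_add, ← pow_add]
    congr 1
    have h1 := two_choose_two m
    have h2 : (r+m)^2 = r^2 + 2*r*m + m^2 := by ring
    have h3 : (2*r+1)*m = 2*r*m + m := by ring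
    omega
  have hm2 : ((X:K⟦X⟧)^2)^(m.choose 2) = X^(2*(m.choose 2)) := by rw [← pow_mul]
  rw [hC, hneg, hm2, hx]
  calc (X^(r^2) * X^(2*(m.choose 2)) * X^((2*r+1)*m))
        * ((-1)^r * ((X:K⟦X⟧)^2)^(r.choose 2) * (C β)^(2*r)
          * gb ((X:K⟦X⟧)^2) (r+m) r) * (pochN ((X:K⟦X⟧)^2) (X^2) (r+m))⁻¹
      = (X^(r^2) * X^(2*(m.choose 2)) * X^((2*r+1)*m))
        * ((-1)^r * ((X:K⟦X⟧)^2)^(r.choose 2) * (C β)^(2*r))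
        * (gb ((X:K⟦X⟧)^2) (r+m) r * (pochN ((X:K⟦X⟧)^2) (X^2) (r+m))⁻¹) := by ring
    _ = (X^(r^2) * X^(2*(m.choose 2)) * X^((2*r+1)*m))
        * ((-1)^r * ((X:K⟦X⟧)^2)^(r.choose 2) * (C β)^(2*r))
        * ((pochN ((X:K⟦X⟧)^2) (X^2) r)⁻¹ * (pochN ((X:K⟦X⟧)^2) (X^2) m)⁻¹) := by rw [hgb]
    _ = ((-1)^m * (-1)^m) * ((X^(r^2) * X^(2*(m.choose 2)) * X^((2*r+1)*m))
        * ((-1)^r * ((X:K⟦X⟧)^2)^(r.choose 2) * (C β)^(2*r))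
        * ((pochN ((X:K⟦X⟧)^2) (X^2) r)⁻¹ * (pochN ((X:K⟦X⟧)^2) (X^2) m)⁻¹)) := by
        rw [hs, one_mul]
    _ = ((-1)^r * X^(r^2) * ((X:K⟦X⟧)^2)^(r.choose 2) * (C β)^(2*r)
        * (pochN ((X:K⟦X⟧)^2) (X^2) r)⁻¹)
      * ((-1)^m * X^(2*(m.choose 2)) * ((-1)^m * X^((2*r+1)*m))
        * (pochN ((X:K⟦X⟧)^2) (X^2) m)⁻¹) := by ring

theorem main (β : K) (h2 : (2:K) ≠ 0) :
    (∑' n : ℕ, (X : K⟦X⟧) ^ (n ^ 2) *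
        pochN (C (β ^ 2)) (X ^ 2) n *
        (pochN ((X : K⟦X⟧) ^ 2) (X ^ 2) n)⁻¹) =
      C (1 / 2 : K) * poch (-(X : K⟦X⟧)) (X ^ 2) *
        (poch (-(C β)) (-X) + poch (C β) (-X)) := by
  have hXc : constantCoeff (X:K⟦X⟧) = 0 := constantCoeff_X
  have hb2 := constantCoeff_X2 (K := K)
  have hnX := constantCoeff_negX (K := K)
  set M : ℕ → K⟦X⟧ := fun r =>
    ((-1)^r * X^(r^2) * ((X:K⟦X⟧)^2)^(r.choose 2) * (C β)^(2*r)
      * (pochN ((X:K⟦X⟧)^2) (X^2) r)⁻¹) * poch ((-X) * ((X:K⟦X⟧)^2)^r) (X^2) with hM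
  -- RHS chain
  have hmS := euler_hasSum (a := -(C β)) (b := (-X:K⟦X⟧)) hnX
  have hpS := euler_hasSum (a := (C β)) (b := (-X:K⟦X⟧)) hnX
  have hadd := hmS.add hpS
  have hinj : Function.Injective (fun r : ℕ => 2*r) := by
    intro a b h
    have : 2*a = 2*b := h
    omega
  have hvan : ∀ m ∉ Set.range (fun r : ℕ => 2*r),
      ((-1)^m * (-X:K⟦X⟧)^(m.choose 2) * (-(C β))^m * (pochN (-X:K⟦X⟧) (-X) m)⁻¹)
      + ((-1)^m * (-X:K⟦X⟧)^(m.choose 2) * (C β)^m * (pochN (-X:K⟦X⟧) (-X) m)⁻¹) = 0 := by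
    intro m hm
    have hodd : Odd m := by
      rcases Nat.even_or_odd m with he | ho
      · exfalso; obtain ⟨k, hk⟩ := he; exact hm ⟨k, by show 2*k = m; omega⟩
      · exact ho
    rw [hodd.neg_pow (C β)]
    ring
  have heven := (hinj.hasSum_iff hvan).2 hadd
  have hmul := heven.mul_left (C (1/2) * poch (-(X:K⟦X⟧)) (X^2))
  have hterm : (fun r => (C (1/2) * poch (-(X:K⟦X⟧)) (X^2)) *
      ((fun m => ((-1)^m * (-X:K⟦X⟧)^(m.choose 2) * (-(C β))^m * (pochN (-X:K⟦X⟧) (-X) m)⁻¹)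
        + ((-1)^m * (-X:K⟦X⟧)^(m.choose 2) * (C β)^m * (pochN (-X:K⟦X⟧) (-X) m)⁻¹))
        ∘ (fun r => 2*r)) r) = M := by
    funext r
    simp only [Function.comp]
    have e0 : ((-1 : K⟦X⟧))^(2*r) = 1 := by rw [pow_mul]; norm_num
    have e1 : (-(C β))^(2*r) = (C β)^(2*r) := Even.neg_pow ⟨r, by omega⟩ _
    have e2 : ((-X : K⟦X⟧))^((2*r).choose 2)
        = (-1)^r * (X^(r^2) * ((X:K⟦X⟧)^2)^(r.choose 2)) := by
      rw [neg_pow, choose2r]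
      have hsgn : ((-1:K⟦X⟧))^(r^2 + 2*r.choose 2) = (-1)^r := by
        have h := two_choose_two r
        rw [show r^2 + 2*r.choose 2 = r + 2*(2*r.choose 2) from by omega, pow_add, pow_mul]
        norm_num
      rw [hsgn, pow_add, pow_mul]
    have e3 : (pochN (-X:K⟦X⟧) (-X) (2*r))⁻¹
        = (pochN (-X:K⟦X⟧) (X^2) r)⁻¹ * (pochN ((X:K⟦X⟧)^2) (X^2) r)⁻¹ := by
      rw [interleave, PowerSeries.mul_inv_rev]
    have e4 : poch (-X:K⟦X⟧) (X^2)
        = pochN (-X:K⟦X⟧) (X^2) r * poch ((-X) * ((X:K⟦X⟧)^2)^r) (X^2) := poch_split hb2 r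
    have e5 : (pochN (-X:K⟦X⟧) (X^2) r)⁻¹ * pochN (-X:K⟦X⟧) (X^2) r = 1 :=
      PowerSeries.inv_mul_cancel _ (by rw [constantCoeff_pochN hnX]; exact one_ne_zero)
    have e6 : C (1/2) * (1+1 : K⟦X⟧) = 1 := by
      rw [one_add_one_eq_two, show (2:K⟦X⟧) = C 2 from (map_ofNat C 2).symm, ← map_mul,
        one_div, inv_mul_cancel₀ h2, map_one]
    rw [e0, e1, e2, e3, e4, hM]
    calc C (1/2) * (pochN (-X:K⟦X⟧) (X^2) r * poch ((-X) * ((X:K⟦X⟧)^2)^r) (X^2)) *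
        (1 * ((-1)^r * (X^(r^2) * ((X:K⟦X⟧)^2)^(r.choose 2))) * (C β)^(2*r) *
          ((pochN (-X:K⟦X⟧) (X^2) r)⁻¹ * (pochN ((X:K⟦X⟧)^2) (X^2) r)⁻¹)
        + 1 * ((-1)^r * (X^(r^2) * ((X:K⟦X⟧)^2)^(r.choose 2))) * (C β)^(2*r) *
          ((pochN (-X:K⟦X⟧) (X^2) r)⁻¹ * (pochN ((X:K⟦X⟧)^2) (X^2) r)⁻¹))
        = (C (1/2) * (1+1 : K⟦X⟧)) *
          (((-1)^r * X^(r^2) * ((X:K⟦X⟧)^2)^(r.choose 2) * (C β)^(2*r)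
            * (pochN ((X:K⟦X⟧)^2) (X^2) r)⁻¹) *
            (((pochN (-X:K⟦X⟧) (X^2) r)⁻¹ * pochN (-X:K⟦X⟧) (X^2) r)
              * poch ((-X) * ((X:K⟦X⟧)^2)^r) (X^2))) := by ring
      _ = ((-1)^r * X^(r^2) * ((X:K⟦X⟧)^2)^(r.choose 2) * (C β)^(2*r)
            * (pochN ((X:K⟦X⟧)^2) (X^2) r)⁻¹) * poch ((-X) * ((X:K⟦X⟧)^2)^r) (X^2) := by
          rw [e5, e6, one_mul, one_mul]
  rw [hterm] at hmul
  rw [← hmul.tsum_eq]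
  -- LHS chain: show LHS tsum = ∑' r, M r
  have hfL : ∀ d n, d+1 ≤ n → coeff d ((X : K⟦X⟧) ^ (n ^ 2) *
      pochN (C (β ^ 2)) (X ^ 2) n * (pochN ((X : K⟦X⟧) ^ 2) (X ^ 2) n)⁻¹) = 0 := by
    intro d n hn
    refine coeff_zero_of_bpow hXc (j := n^2)
      ⟨pochN (C (β ^ 2)) (X ^ 2) n * (pochN ((X : K⟦X⟧) ^ 2) (X ^ 2) n)⁻¹, by ring⟩ ?_
    have := Nat.le_self_pow (two_ne_zero) n
    omega
  have hfM : ∀ d r, d+1 ≤ r → coeff d (M r) = 0 := by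
    intro d r hr
    refine coeff_zero_of_bpow hXc (j := r^2)
      ⟨(-1)^r * ((X:K⟦X⟧)^2)^(r.choose 2) * (C β)^(2*r)
        * (pochN ((X:K⟦X⟧)^2) (X^2) r)⁻¹ * poch ((-X) * ((X:K⟦X⟧)^2)^r) (X^2), by
          rw [hM]; ring⟩ ?_
    have := Nat.le_self_pow (two_ne_zero) r
    omega
  apply PowerSeries.ext
  intro d
  rw [PS.coeff_tsum (fun d => d+1) hfL d, PS.coeff_tsum (fun d => d+1) hfM d]
  have hq : ∀ n, (X:K⟦X⟧)^(n^2) * pochN (C (β^2)) (X^2) n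
      * (pochN ((X:K⟦X⟧)^2) (X^2) n)⁻¹
      = ∑ r ∈ range (n+1), (X:K⟦X⟧)^(n^2) * ((-1)^r * ((X:K⟦X⟧)^2)^(r.choose 2)
          * (C (β^2))^r * gb ((X:K⟦X⟧)^2) n r) * (pochN ((X:K⟦X⟧)^2) (X^2) n)⁻¹ := by
    intro n
    rw [qbinom ((X:K⟦X⟧)^2) n (C (β^2)), Finset.mul_sum, Finset.sum_mul]
  calc ∑ n ∈ range (d+1), coeff d ((X : K⟦X⟧) ^ (n ^ 2) *
        pochN (C (β ^ 2)) (X ^ 2) n * (pochN ((X : K⟦X⟧) ^ 2) (X ^ 2) n)⁻¹)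
      = ∑ n ∈ range (d+1), ∑ r ∈ range (n+1), coeff d ((X:K⟦X⟧)^(n^2)
          * ((-1)^r * ((X:K⟦X⟧)^2)^(r.choose 2) * (C (β^2))^r * gb ((X:K⟦X⟧)^2) n r)
          * (pochN ((X:K⟦X⟧)^2) (X^2) n)⁻¹) := by
        apply Finset.sum_congr rfl
        intro n _
        rw [hq n, map_sum]
    _ = ∑ r ∈ range (d+1), ∑ n ∈ Finset.Ico r (d+1), coeff d ((X:K⟦X⟧)^(n^2)
          * ((-1)^r * ((X:K⟦X⟧)^2)^(r.choose 2) * (C (β^2))^r * gb ((X:K⟦X⟧)^2) n r)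
          * (pochN ((X:K⟦X⟧)^2) (X^2) n)⁻¹) := by
        apply Finset.sum_comm'
        intro x y
        simp only [Finset.mem_range, Finset.mem_Ico]
        omega
    _ = ∑ r ∈ range (d+1), coeff d (M r) := by
        apply Finset.sum_congr rfl
        intro r hr
        rw [Finset.mem_range] at hr
        rw [Finset.sum_Ico_eq_sum_range]
        have hMr : HasSum (fun m => ((-1)^r * X^(r^2) * ((X:K⟦X⟧)^2)^(r.choose 2)
            * (C β)^(2*r) * (pochN ((X:K⟦X⟧)^2) (X^2) r)⁻¹)
            * ((-1)^m * ((X:K⟦X⟧)^2)^(m.choose 2) * ((-X) * ((X:K⟦X⟧)^2)^r)^m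
              * (pochN ((X:K⟦X⟧)^2) (X^2) m)⁻¹)) (M r) := by
          rw [hM]
          exact (euler_hasSum hb2 (a := (-X) * ((X:K⟦X⟧)^2)^r)).mul_left _
        have hfem : ∀ d m, d+1 ≤ m → coeff d (((-1)^r * X^(r^2) * ((X:K⟦X⟧)^2)^(r.choose 2)
            * (C β)^(2*r) * (pochN ((X:K⟦X⟧)^2) (X^2) r)⁻¹)
            * ((-1)^m * ((X:K⟦X⟧)^2)^(m.choose 2) * ((-X) * ((X:K⟦X⟧)^2)^r)^m
              * (pochN ((X:K⟦X⟧)^2) (X^2) m)⁻¹)) = 0 := by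
          intro d' m hm
          have hXd : (X:K⟦X⟧)^m ∣ ((-X) * ((X:K⟦X⟧)^2)^r)^m :=
            pow_dvd_pow_of_dvd ⟨-(((X:K⟦X⟧)^2)^r), by ring⟩ m
          refine coeff_zero_of_bpow hXc (j := m) ?_ (by omega)
          exact ((hXd.mul_left ((-1)^m * ((X:K⟦X⟧)^2)^(m.choose 2))).mul_right
            ((pochN ((X:K⟦X⟧)^2) (X^2) m)⁻¹)).mul_left _
        rw [PS.coeff_of_hasSum hMr (fun d => d+1) hfem d]
        calc ∑ m ∈ range (d+1-r), coeff d ((X:K⟦X⟧)^((r+m)^2)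
              * ((-1)^r * ((X:K⟦X⟧)^2)^(r.choose 2) * (C (β^2))^r
                * gb ((X:K⟦X⟧)^2) (r+m) r)
              * (pochN ((X:K⟦X⟧)^2) (X^2) (r+m))⁻¹)
            = ∑ m ∈ range (d+1-r), coeff d (((-1)^r * X^(r^2) * ((X:K⟦X⟧)^2)^(r.choose 2)
              * (C β)^(2*r) * (pochN ((X:K⟦X⟧)^2) (X^2) r)⁻¹)
              * ((-1)^m * ((X:K⟦X⟧)^2)^(m.choose 2) * ((-X) * ((X:K⟦X⟧)^2)^r)^m
                * (pochN ((X:K⟦X⟧)^2) (X^2) m)⁻¹)) := by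
              apply Finset.sum_congr rfl
              intro m _
              rw [term_eq β r m]
          _ = ∑ m ∈ range (d+1), coeff d (((-1)^r * X^(r^2) * ((X:K⟦X⟧)^2)^(r.choose 2)
              * (C β)^(2*r) * (pochN ((X:K⟦X⟧)^2) (X^2) r)⁻¹)
              * ((-1)^m * ((X:K⟦X⟧)^2)^(m.choose 2) * ((-X) * ((X:K⟦X⟧)^2)^r)^m
                * (pochN ((X:K⟦X⟧)^2) (X^2) m)⁻¹)) := by
              apply Finset.sum_subset (Finset.range_subset_range.2 (by omega))
              intro m hm1 hm2
              rw [Finset.mem_range] at hm1 hm2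
              rw [← term_eq β r m]
              refine coeff_zero_of_bpow hXc (j := (r+m)^2)
                ⟨((-1)^r * ((X:K⟦X⟧)^2)^(r.choose 2) * (C (β^2))^r
                  * gb ((X:K⟦X⟧)^2) (r+m) r)
                  * (pochN ((X:K⟦X⟧)^2) (X^2) (r+m))⁻¹, by ring⟩ ?_
              have h1 : d + 1 ≤ r + m := by omega
              have := Nat.le_self_pow (two_ne_zero) (r+m)
              omega

/-- With `A = B²` (`B = RatFunc.X` a formal variable, so `√A = B`):
`F(A;q) := Σ_{n≥0} q^{n²}(A;q²)_n/(q²;q²)_n = ½(-q;q²)_∞ [(-√A;-q)_∞ + (√A;-q)_∞]`. -/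
theorem F_identity :
    (∑' n : ℕ, (X : (RatFunc ℚ)⟦X⟧) ^ (n ^ 2) *
        pochN (C ((RatFunc.X : RatFunc ℚ) ^ 2)) (X ^ 2) n *
        (pochN ((X : (RatFunc ℚ)⟦X⟧) ^ 2) (X ^ 2) n)⁻¹) =
      C (1 / 2 : RatFunc ℚ) * poch (-(X : (RatFunc ℚ)⟦X⟧)) (X ^ 2) *
        (poch (-(C (RatFunc.X : RatFunc ℚ))) (-X) + poch (C (RatFunc.X : RatFunc ℚ)) (-X)) := by
  have h2 : (2 : RatFunc ℚ) ≠ 0 := by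
    have h : Function.Injective (algebraMap (Polynomial ℚ) (RatFunc ℚ)) :=
      RatFunc.algebraMap_injective ℚ
    intro hh
    have h1 : (algebraMap (Polynomial ℚ) (RatFunc ℚ)) 2 = algebraMap _ _ 0 := by
      rw [map_ofNat, map_zero]; exact hh
    have h2 := h h1
    norm_num at h2
  exact main RatFunc.X h2
end
end

section
/- If λ is a self-conjugate partition and t is a positive integer with t-quotient (ν^{(0)},…,ν^{(t-1)}) under the Littlewood decomposition, then ν^{(j)} is the conjugate of ν^{(t-1-j)} for each 0 ≤ j ≤ t-1; in particular, when t is odd, ν^{((t-1)/2)} is self-conjugate. -/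
open Finset PowerSeries
open scoped Classical

noncomputable section

/-- `f : ℕ → ℕ` represents a partition: antitone with finite support
(`f i` is the `(i+1)`-st part). -/
def IsPartitionFun (f : ℕ → ℕ) : Prop :=
  (∀ i j, i ≤ j → f j ≤ f i) ∧ ∃ N, ∀ i, N ≤ i → f i = 0

/-- The canonically-indexed set of positions of vertical steps (0s) in the bi-infinite
boundary word of the partition `f`: `{f(j) - (j+1) : j ∈ ℕ} ⊆ ℤ`. -/
def zset (f : ℕ → ℕ) : Set ℤ := {m | ∃ j : ℕ, m = (f j : ℤ) - (j + 1)}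

/-- The conjugate partition of `f`: `(conjFun f) j = #{i : f i > j}`. -/
def conjFun (f : ℕ → ℕ) (j : ℕ) : ℕ := Set.ncard {i : ℕ | j < f i}


/-- A finite downward-closed set of naturals is an initial segment of length its cardinality. -/
lemma initSeg {S : Set ℕ} (hfin : S.Finite) (hdc : ∀ a b : ℕ, a ≤ b → b ∈ S → a ∈ S)
    (k : ℕ) : k ∈ S ↔ k < S.ncard := by
  constructor
  · intro hk
    have h1 : Set.Iic k ⊆ S := fun a ha => hdc a k ha hk
    have h2 : (Set.Iic k).ncard ≤ S.ncard := Set.ncard_le_ncard h1 hfin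
    rw [← Finset.coe_Iic, Set.ncard_coe_finset, Nat.card_Iic] at h2
    omega
  · intro hk
    by_contra hkS
    have h1 : S ⊆ Set.Iio k := by
      intro m hm
      by_contra hmk
      simp only [Set.mem_Iio, not_lt] at hmk
      exact hkS (hdc k m hmk hm)
    have h2 : S.ncard ≤ (Set.Iio k).ncard := Set.ncard_le_ncard h1 (Set.finite_Iio k)
    rw [← Finset.coe_Iio, Set.ncard_coe_finset, Nat.card_Iio] at h2
    omega

lemma sortedChar : ∀ L : List ℕ, L.Pairwise (· ≥ ·) →
    ∀ j i : ℕ, j < L.getD i 0 ↔ i < L.countP (fun a => decide (j < a)) := by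
  intro L
  induction L with
  | nil => intro _ j i; simp
  | cons a L ih =>
    intro hs j i
    have ha : ∀ x ∈ L, x ≤ a := fun x hx => (List.pairwise_cons.mp hs).1 x hx
    have hL : L.Pairwise (· ≥ ·) := (List.pairwise_cons.mp hs).2
    rw [List.countP_cons]
    cases i with
    | zero =>
      simp only [List.getD_cons_zero]
      by_cases hja : j < a
      · simp [hja]
      · have hz : L.countP (fun x => decide (j < x)) = 0 := by
          rw [List.countP_eq_zero]
          intro x hx
          have := ha x hx
          simp only [decide_eq_true_eq]
          omega
        simp [hja, hz]
    | succ i =>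
      simp only [List.getD_cons_succ]
      by_cases hja : j < a
      · rw [ih hL j i]
        simp [hja]
      · have hz : L.countP (fun x => decide (j < x)) = 0 := by
          rw [List.countP_eq_zero]
          intro x hx
          have := ha x hx
          simp only [decide_eq_true_eq]
          omega
        rw [ih hL j i, hz]
        simp [hja]

lemma colLen_countP {n : ℕ} (p : n.Partition) (j : ℕ) :
    colLen p j = ((p.parts.sort (· ≤ ·)).reverse).countP (fun a => decide (j < a)) := by
  rw [colLen, ← Multiset.countP_eq_card_filter, List.countP_reverse]
  conv_lhs => rw [← p.parts.sort_eq (· ≤ ·)]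
  rfl

lemma rowColChar {n : ℕ} (p : n.Partition) (j i : ℕ) : j < rowLen p i ↔ i < colLen p j := by
  have hs : ((p.parts.sort (· ≤ ·)).reverse).Pairwise (· ≥ ·) := by
    have h0 : List.Pairwise (· ≤ ·) (p.parts.sort (· ≤ ·)) := p.parts.pairwise_sort _
    exact List.pairwise_reverse.mpr h0
  rw [rowLen, sortedChar _ hs j i, colLen_countP]

lemma rowLen_isPF {n : ℕ} (p : n.Partition) : IsPartitionFun (rowLen p) := by
  constructor
  · intro i i' hii'
    by_contra h
    push_neg at h
    have h3 := (rowColChar p (rowLen p i) i').mp h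
    have h4 : i < colLen p (rowLen p i) := lt_of_le_of_lt hii' h3
    have := (rowColChar p (rowLen p i) i).mpr h4
    omega
  · refine ⟨colLen p 0, fun i hi => ?_⟩
    by_contra h
    have := (rowColChar p 0 i).mp (by omega)
    omega

lemma conjFun_char {g : ℕ → ℕ} (hg : IsPartitionFun g) (j i : ℕ) :
    j < g i ↔ i < conjFun g j := by
  obtain ⟨hmono, N, hN⟩ := hg
  have hfin : {i : ℕ | j < g i}.Finite := by
    apply Set.Finite.subset (Set.finite_Iio N)
    intro x hx
    simp only [Set.mem_setOf_eq] at hx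
    by_contra hxx
    simp only [Set.mem_Iio, not_lt] at hxx
    rw [hN x hxx] at hx
    omega
  exact initSeg hfin (fun a b hab hb => lt_of_lt_of_le hb (hmono a b hab)) i

lemma conjFun_isPF {g : ℕ → ℕ} (hg : IsPartitionFun g) : IsPartitionFun (conjFun g) := by
  constructor
  · intro j j' hjj'
    by_contra h
    push_neg at h
    have h1 : j' < g (conjFun g j) := (conjFun_char hg j' _).mpr h
    have h2 : j < g (conjFun g j) := lt_of_le_of_lt hjj' h1
    have := (conjFun_char hg j _).mp h2
    omega
  · refine ⟨g 0, fun j hj => ?_⟩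
    by_contra h
    have := (conjFun_char hg j 0).mpr (by omega)
    omega

lemma conjFun_rowLen {n : ℕ} (p : n.Partition) (j : ℕ) : conjFun (rowLen p) j = colLen p j := by
  have hset : {i : ℕ | j < rowLen p i} = Set.Iio (colLen p j) := by
    ext i; simpa using rowColChar p j i
  rw [conjFun, hset, ← Finset.coe_Iio, Set.ncard_coe_finset, Nat.card_Iio]

lemma zset_key {f : ℕ → ℕ} (hf : IsPartitionFun f) (j : ℕ) :
    {m : ℤ | m ∈ zset f ∧ (f j : ℤ) - (j + 1) < m}.ncard = j := by
  have hanti : ∀ i i' : ℕ, i < i' → (f i' : ℤ) - (i' + 1) < (f i : ℤ) - (i + 1) := by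
    intro i i' hii'
    have := hf.1 i i' (le_of_lt hii')
    omega
  have hset : {m : ℤ | m ∈ zset f ∧ (f j : ℤ) - (j + 1) < m}
      = (fun i : ℕ => (f i : ℤ) - (i + 1)) '' (Set.Iio j) := by
    ext m
    simp only [Set.mem_setOf_eq, Set.mem_image, Set.mem_Iio, zset]
    constructor
    · rintro ⟨⟨i, rfl⟩, hlt⟩
      refine ⟨i, ?_, rfl⟩
      by_contra hij
      push_neg at hij
      rcases lt_or_eq_of_le hij with h1 | h1
      · have := hanti j i h1; omega
      · subst h1; omega
    · rintro ⟨i, hij, rfl⟩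
      exact ⟨⟨i, rfl⟩, hanti i j hij⟩
  have hinj : Set.InjOn (fun i : ℕ => (f i : ℤ) - (i + 1)) (Set.Iio j) := by
    intro a _ b _ hab
    by_contra hne
    rcases lt_trichotomy a b with h1 | h1 | h1
    · have := hanti a b h1; simp only at hab; omega
    · exact hne h1
    · have := hanti b a h1; simp only at hab; omega
  rw [hset, Set.ncard_image_of_injOn hinj, ← Finset.coe_Iio, Set.ncard_coe_finset, Nat.card_Iio]

lemma zset_inj {f g : ℕ → ℕ} (hf : IsPartitionFun f) (hg : IsPartitionFun g)
    (h : zset f = zset g) : f = g := by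
  funext j
  have h1 : (f j : ℤ) - (j + 1) ∈ zset g := h ▸ ⟨j, rfl⟩
  obtain ⟨j', hj'⟩ := h1
  have e1 := zset_key hf j
  have e2 := zset_key hg j'
  have hsets : {m : ℤ | m ∈ zset f ∧ (f j : ℤ) - (j + 1) < m}
      = {m : ℤ | m ∈ zset g ∧ (g j' : ℤ) - (j' + 1) < m} := by rw [← h, ← hj']
  rw [hsets, e2] at e1
  subst e1
  omega

lemma zset_conj {g : ℕ → ℕ} (hg : IsPartitionFun g) (m : ℤ) :
    m ∈ zset (conjFun g) ↔ (-1 - m) ∉ zset g := by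
  obtain ⟨hmono, N, hN⟩ := hg
  have hg' : IsPartitionFun g := ⟨hmono, N, hN⟩
  have hchar := conjFun_char hg'
  constructor
  · rintro ⟨j, rfl⟩ ⟨i, hi⟩
    rcases lt_or_ge j (g i) with h1 | h1
    · have := (hchar j i).mp h1
      omega
    · have : ¬ i < conjFun g j := fun hc => absurd ((hchar j i).mpr hc) (by omega)
      omega
  · intro H
    have hnotB : ∀ i : ℕ, m ≠ (i : ℤ) - g i := by
      intro i hc
      exact H ⟨i, by omega⟩
    have hfin : {i : ℕ | (i : ℤ) - g i < m}.Finite := by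
      apply Set.Finite.subset (Set.finite_Iio (N + m.toNat))
      intro x hx
      simp only [Set.mem_setOf_eq] at hx
      simp only [Set.mem_Iio]
      by_contra hxx
      push_neg at hxx
      have hgx : g x = 0 := hN x (by omega)
      have hm1 : m ≤ (m.toNat : ℤ) := Int.self_le_toNat m
      omega
    have hdc : ∀ a b : ℕ, a ≤ b → b ∈ {i : ℕ | (i : ℤ) - g i < m}
        → a ∈ {i : ℕ | (i : ℤ) - g i < m} := by
      intro a b hab hb
      simp only [Set.mem_setOf_eq] at hb ⊢
      have := hmono a b hab
      omega
    set J := {i : ℕ | (i : ℤ) - g i < m}.ncard with hJdef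
    have hT : ∀ i : ℕ, (i : ℤ) - g i < m ↔ i < J := fun i => initSeg hfin hdc i
    have hJm : (m : ℤ) < (J : ℤ) := by
      rcases le_or_gt 0 m with h0 | h0
      · have h1 : (m.toNat : ℤ) - g m.toNat ≤ m := by omega
        have h2 : (m.toNat : ℤ) - g m.toNat ≠ m := fun hc => hnotB m.toNat hc.symm
        have h3 : m.toNat < J := (hT m.toNat).mp (by omega)
        omega
      · omega
    set j' : ℕ := ((J : ℤ) - m - 1).toNat with hj'def
    have hj' : (j' : ℤ) = (J : ℤ) - m - 1 := Int.toNat_of_nonneg (by omega)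
    refine ⟨j', ?_⟩
    have hset : {i : ℕ | j' < g i} = Set.Iio J := by
      ext i
      simp only [Set.mem_setOf_eq, Set.mem_Iio]
      constructor
      · intro hgi
        by_contra hiJ
        push_neg at hiJ
        have h1 : ¬ (J : ℤ) - g J < m := fun hc => by have := (hT J).mp hc; omega
        have h2 : (J : ℤ) - g J ≠ m := fun hc => hnotB J hc.symm
        have h4 := hmono J i hiJ
        omega
      · intro hiJ
        have h1 : ((J - 1 : ℕ) : ℤ) - g (J - 1) < m := (hT (J - 1)).mpr (by omega)
        have h3 := hmono i (J - 1) (by omega)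
        omega
    have hcj : conjFun g j' = J := by
      rw [conjFun, hset, ← Finset.coe_Iio, Set.ncard_coe_finset, Nat.card_Iio]
    rw [hcj]
    omega

/-- Littlewood decomposition for self-conjugate partitions: if `(ν 0, …, ν (t-1))` is the
`t`-quotient of a self-conjugate partition `p` (characterized by: the boundary word of
`ν k` is the subsequence of the boundary word of `p` along indices `≡ k (mod t)`), then
`ν j` is the conjugate of `ν (t-1-j)` for all `j < t`; in particular for odd `t` the middle
component `ν ((t-1)/2)` is self-conjugate. -/
theorem littlewood_quotient_selfConj (t : ℕ) (ht : 0 < t) (n : ℕ) (p : n.Partition)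
    (hp : SelfConj p) (ν : ℕ → ℕ → ℕ)
    (hpart : ∀ k < t, IsPartitionFun (ν k))
    (hquot : ∀ k < t, ∀ i : ℤ, ((t : ℤ) * i + (k : ℤ) ∈ zset (rowLen p)) ↔ i ∈ zset (ν k)) :
    (∀ j < t, ν j = conjFun (ν (t - 1 - j))) ∧
      (Odd t → ν ((t - 1) / 2) = conjFun (ν ((t - 1) / 2))) := by
  have hfpf : IsPartitionFun (rowLen p) := rowLen_isPF p
  have hfconj : conjFun (rowLen p) = rowLen p := by
    funext j
    rw [conjFun_rowLen p j, ← hp j]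
  have hsym : ∀ m : ℤ, m ∈ zset (rowLen p) ↔ (-1 - m) ∉ zset (rowLen p) := by
    intro m
    have h := zset_conj hfpf m
    rwa [hfconj] at h
  have main : ∀ j < t, ν j = conjFun (ν (t - 1 - j)) := by
    intro j hj
    have hk : t - 1 - j < t := by omega
    apply zset_inj (hpart j hj) (conjFun_isPF (hpart _ hk))
    ext i
    have harg : -1 - ((t : ℤ) * i + j) = (t : ℤ) * (-1 - i) + ((t - 1 - j : ℕ) : ℤ) := by
      have hcast : ((t - 1 - j : ℕ) : ℤ) = (t : ℤ) - 1 - j := by omega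
      rw [hcast]; ring
    calc i ∈ zset (ν j) ↔ (t : ℤ) * i + j ∈ zset (rowLen p) := (hquot j hj i).symm
      _ ↔ (-1 - ((t : ℤ) * i + j)) ∉ zset (rowLen p) := hsym _
      _ ↔ ((t : ℤ) * (-1 - i) + ((t - 1 - j : ℕ) : ℤ)) ∉ zset (rowLen p) := by rw [harg]
      _ ↔ (-1 - i) ∉ zset (ν (t - 1 - j)) := not_congr (hquot _ hk _)
      _ ↔ i ∈ zset (conjFun (ν (t - 1 - j))) := (zset_conj (hpart _ hk) i).symm
  refine ⟨main, fun hodd => ?_⟩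
  have h2 : t - 1 - (t - 1) / 2 = (t - 1) / 2 := by
    obtain ⟨m, hm⟩ := hodd
    omega
  have h3 := main ((t - 1) / 2) (by omega)
  rwa [h2] at h3
end
end
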